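/- arXiv:2001.00185 — 10 statements merged into one kernel-verified Lean document; each statement's English description precedes it below -/
import Mathlib

section
/- Let {p_0, p_1, ...} be an orthonormal basis of ℝ[t] with respect to a measure dμ on [-1,1]. For distinct complex numbers α_1, ..., α_k, define dμ̃(t) = (t-α_1)⋯(t-α_k) dμ(t) and define p̃_i(t) as the polynomial obtained by dividing by (t-α_1)⋯(t-α_k) the (k+1)×(k+1) determinant whose rows are (p_{i+k-j}(t), p_{i+k-j}(α_1), ..., p_{i+k-j}(α_k)) for j = 0, ..., k. Then the family {p̃_0, p̃_1, ...} is orthogonal with respect to dμ̃: for all n > m ≥ 0, ∫_{-1}^1 p̃_m(t) p̃_n(t) dμ̃(t) = 0. -/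
open MeasureTheory

open Polynomial in
lemma integ_poly (μ : Measure ℝ) [IsFiniteMeasure μ]
    (hsupp : μ (Set.Icc (-1 : ℝ) 1)ᶜ = 0) (r : ℝ[X]) :
    Integrable (fun t => r.eval t) μ := by
  obtain ⟨C, hC⟩ := (isCompact_Icc (a := (-1:ℝ)) (b := 1)).exists_bound_of_continuousOn
    (r.continuous_aeval.continuousOn)
  refine Integrable.mono' (integrable_const C) (r.continuous_aeval.aestronglyMeasurable) ?_
  rw [MeasureTheory.ae_iff]
  refine measure_mono_null ?_ hsupp
  intro t ht
  simp only [Set.mem_setOf_eq, not_le] at ht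
  intro hmem
  exact absurd (hC t hmem) (by simpa using not_le.mpr ht)

open Polynomial in
lemma intA (μ : Measure ℝ) [IsFiniteMeasure μ]
    (hsupp : μ (Set.Icc (-1 : ℝ) 1)ᶜ = 0)
    (p : ℕ → Polynomial ℝ)
    (hdeg : ∀ i, (p i).natDegree = i)
    (horth : ∀ i j, ∫ t, (p i).eval t * (p j).eval t ∂μ = if i = j then 1 else 0) :
    ∀ (i q : ℕ) (r : ℝ[X]), r.degree < (i : ℕ) → i ≤ q →
      ∫ t, r.eval t * (p q).eval t ∂μ = 0 := by
  intro i
  induction i with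
  | zero =>
    intro q r hr _
    have : r = 0 := by
      rw [← Polynomial.degree_eq_bot, ← Nat.WithBot.lt_zero_iff]
      simpa using hr
    simp [this]
  | succ i ih =>
    intro q r hr hq
    by_cases h0 : r = 0
    · simp [h0]
    by_cases hlt : r.degree < (i : ℕ)
    · exact ih q r hlt (le_trans (Nat.le_succ i) hq)
    have hdr : r.natDegree = i := by
      have h1 : r.natDegree < i + 1 := (natDegree_lt_iff_degree_lt h0).mpr (by exact_mod_cast hr)
      have h2 : ¬ r.natDegree < i := fun h =>
        hlt ((natDegree_lt_iff_degree_lt h0).mp h)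
      omega
    have hpi0 : p i ≠ 0 := by
      intro h
      have := horth i i
      simp [h] at this
    set c := r.leadingCoeff / (p i).leadingCoeff with hc_def
    have hlc : (p i).leadingCoeff ≠ 0 := leadingCoeff_ne_zero.mpr hpi0
    have hrl : r.leadingCoeff ≠ 0 := leadingCoeff_ne_zero.mpr h0
    have hc : c ≠ 0 := div_ne_zero hrl hlc
    have hdeg_eq : r.degree = (C c * p i).degree := by
      rw [degree_mul, degree_C hc, zero_add, degree_eq_natDegree h0,
        degree_eq_natDegree hpi0, hdr, hdeg i]
    have hlc_eq : r.leadingCoeff = (C c * p i).leadingCoeff := by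
      rw [leadingCoeff_mul, leadingCoeff_C, hc_def, div_mul_cancel₀ _ hlc]
    have hdr' : (r - C c * p i).degree < (i : ℕ) := by
      have := degree_sub_lt hdeg_eq h0 hlc_eq
      rwa [degree_eq_natDegree h0, hdr] at this
    have h1 := ih q (r - C c * p i) hdr' (le_trans (Nat.le_succ i) hq)
    have hptw : ∀ t : ℝ, r.eval t * (p q).eval t =
        ((r - C c * p i) * p q).eval t + c * ((p i * p q).eval t) := by
      intro t
      simp only [eval_mul, eval_sub, eval_C]
      ring
    calc ∫ t, r.eval t * (p q).eval t ∂μ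
        = ∫ t, (((r - C c * p i) * p q).eval t + c * ((p i * p q).eval t)) ∂μ := by
          exact integral_congr_ae (Filter.Eventually.of_forall hptw)
      _ = (∫ t, ((r - C c * p i) * p q).eval t ∂μ) + ∫ t, c * ((p i * p q).eval t) ∂μ := by
          exact integral_add (integ_poly μ hsupp _) ((integ_poly μ hsupp (p i * p q)).const_mul c)
      _ = 0 := by
          rw [integral_const_mul]
          have h2 : ∫ t, ((r - C c * p i) * p q).eval t ∂μ = 0 := by
            rw [← h1]
            exact integral_congr_ae (Filter.Eventually.of_forall (by simp [eval_mul]))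
          have h3 : ∫ t, (p i * p q).eval t ∂μ = 0 := by
            have := horth i q
            rw [if_neg (by omega)] at this
            rw [← this]
            exact integral_congr_ae (Filter.Eventually.of_forall (by simp [eval_mul]))
          rw [h2, h3, mul_zero, add_zero]

theorem weighted_orthogonality (μ : Measure ℝ) [IsFiniteMeasure μ]
    (hsupp : μ (Set.Icc (-1 : ℝ) 1)ᶜ = 0)
    (p : ℕ → Polynomial ℝ)
    (hdeg : ∀ i, (p i).natDegree = i)
    (horth : ∀ i j, ∫ t, (p i).eval t * (p j).eval t ∂μ = if i = j then 1 else 0)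
    (k : ℕ) (α : Fin k → ℂ) (hα : Function.Injective α)
    (ptil : ℕ → Polynomial ℂ)
    (hptil : ∀ i : ℕ, ∀ t : ℂ,
      (∏ j, (t - α j)) * (ptil i).eval t =
        Matrix.det (Matrix.of fun (j l : Fin (k + 1)) =>
          Polynomial.aeval ((Fin.cons t α : Fin (k + 1) → ℂ) l) (p (i + k - j))))
    (m n : ℕ) (hmn : m < n) :
    ∫ t : ℝ, (ptil m).eval (t : ℂ) * (ptil n).eval (t : ℂ) * ∏ j, ((t : ℂ) - α j) ∂μ
      = 0 := by
  classical
  -- Cofactor expansion of the determinant along the first column.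
  have hM : ∀ i : ℕ, ∃ c : Fin (k + 1) → ℂ, ∀ t : ℂ,
      (∏ j, (t - α j)) * (ptil i).eval t =
        ∑ j : Fin (k + 1), c j * Polynomial.aeval t (p (i + k - j)) := by
    intro i
    refine ⟨fun j => (-1) ^ (j : ℕ) * Matrix.det
      (Matrix.of fun (j' l' : Fin k) =>
        (Polynomial.aeval (α l') (p (i + k - (j.succAbove j' : Fin (k+1)))) : ℂ)), ?_⟩
    intro t
    rw [hptil i t, Matrix.det_succ_column_zero]
    refine Finset.sum_congr rfl fun j _ => ?_
    have hsub : (Matrix.of fun (j l : Fin (k + 1)) =>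
          (Polynomial.aeval ((Fin.cons t α : Fin (k + 1) → ℂ) l) (p (i + k - j)) : ℂ)).submatrix
          j.succAbove Fin.succ =
        Matrix.of fun (j' l' : Fin k) =>
          (Polynomial.aeval (α l') (p (i + k - (j.succAbove j' : Fin (k+1)))) : ℂ) := by
      ext j' l'
      simp [Matrix.submatrix, Fin.cons_succ]
    rw [hsub]
    simp only [Matrix.of_apply, Fin.cons_zero]
    ring
  obtain ⟨cm, hcm⟩ := hM m
  obtain ⟨cn, hcn⟩ := hM n
  -- Degree bound for ptil m.
  have hdegm : (ptil m).natDegree ≤ m := by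
    have hpoly : (∏ j, (Polynomial.X - Polynomial.C (α j))) * ptil m =
        ∑ j : Fin (k + 1), Polynomial.C (cm j) *
          (p (m + k - j)).map (algebraMap ℝ ℂ) := by
      apply Polynomial.funext
      intro t
      have := hcm t
      simp only [Polynomial.eval_mul, Polynomial.eval_prod, Polynomial.eval_sub,
        Polynomial.eval_X, Polynomial.eval_C, Polynomial.eval_finset_sum,
        Polynomial.eval_map, ← Polynomial.aeval_def]
      exact this
    have hbound : (∑ j : Fin (k + 1), Polynomial.C (cm j) *
        (p (m + k - j)).map (algebraMap ℝ ℂ)).natDegree ≤ m + k := by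
      refine Polynomial.natDegree_sum_le_of_forall_le _ _ fun j _ => ?_
      refine le_trans (Polynomial.natDegree_C_mul_le _ _) ?_
      refine le_trans Polynomial.natDegree_map_le ?_
      rw [hdeg]
      omega
    have hmonic : (∏ j, (Polynomial.X - Polynomial.C (α j))).Monic :=
      Polynomial.monic_prod_of_monic _ _ fun j _ => Polynomial.monic_X_sub_C _
    have hprodne : (∏ j, (Polynomial.X - Polynomial.C (α j))) ≠ 0 := hmonic.ne_zero
    have hnatprod : (∏ j, (Polynomial.X - Polynomial.C (α j))).natDegree = k := by
      rw [Polynomial.natDegree_prod _ _ fun j _ => Polynomial.X_sub_C_ne_zero _]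
      simp
    by_cases hpm : ptil m = 0
    · simp [hpm]
    have := Polynomial.natDegree_mul hprodne hpm
    rw [hpoly] at this
    rw [hnatprod] at this
    omega
  -- Pointwise identity for the integrand over real t.
  have key : ∀ t : ℝ,
      (ptil m).eval (t : ℂ) * (ptil n).eval (t : ℂ) * ∏ j, ((t : ℂ) - α j) =
      ∑ j : Fin (k + 1), ∑ i ∈ Finset.range (m + 1),
        (cn j * (ptil m).coeff i) * (((t ^ i * (p (n + k - j)).eval t : ℝ)) : ℂ) := by
    intro t
    have h1 : (ptil n).eval (t : ℂ) * ∏ j, ((t : ℂ) - α j) =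
        ∑ j : Fin (k + 1), cn j * (((p (n + k - j)).eval t : ℝ) : ℂ) := by
      rw [mul_comm, hcn (t : ℂ)]
      refine Finset.sum_congr rfl fun j _ => ?_
      congr 1
      have : ((t : ℂ)) = algebraMap ℝ ℂ t := rfl
      rw [this, Polynomial.aeval_algebraMap_apply]
      simp [Polynomial.aeval_def, Polynomial.eval₂_eq_eval_map]
    have h2 : (ptil m).eval (t : ℂ) =
        ∑ i ∈ Finset.range (m + 1), (ptil m).coeff i * (t : ℂ) ^ i :=
      Polynomial.eval_eq_sum_range' (Nat.lt_succ_of_le hdegm) _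
    rw [mul_assoc, h1, h2, Finset.sum_mul_sum, Finset.sum_comm]
    refine Finset.sum_congr rfl fun j _ => Finset.sum_congr rfl fun i _ => ?_
    push_cast
    ring
  have hinteg : ∀ (j : Fin (k + 1)) (i : ℕ),
      Integrable (fun t : ℝ =>
        (cn j * (ptil m).coeff i) * (((t ^ i * (p (n + k - j)).eval t : ℝ)) : ℂ)) μ := by
    intro j i
    have h := (integ_poly μ hsupp (Polynomial.X ^ i * p (n + k - j)))
    have h2 : Integrable (fun t : ℝ => t ^ i * (p (n + k - j)).eval t) μ := by
      refine h.congr (Filter.Eventually.of_forall fun t => ?_)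
      simp [Polynomial.eval_mul, Polynomial.eval_pow]
    exact (h2.ofReal (𝕜 := ℂ)).const_mul _
  calc ∫ t : ℝ, (ptil m).eval (t : ℂ) * (ptil n).eval (t : ℂ) * ∏ j, ((t : ℂ) - α j) ∂μ
      = ∫ t : ℝ, ∑ j : Fin (k + 1), ∑ i ∈ Finset.range (m + 1),
          (cn j * (ptil m).coeff i) * (((t ^ i * (p (n + k - j)).eval t : ℝ)) : ℂ) ∂μ := by
        exact integral_congr_ae (Filter.Eventually.of_forall key)
    _ = ∑ j : Fin (k + 1), ∫ t : ℝ, ∑ i ∈ Finset.range (m + 1),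
          (cn j * (ptil m).coeff i) * (((t ^ i * (p (n + k - j)).eval t : ℝ)) : ℂ) ∂μ := by
        exact integral_finset_sum _ fun j _ => integrable_finset_sum _ fun i _ => hinteg j i
    _ = ∑ j : Fin (k + 1), ∑ i ∈ Finset.range (m + 1), ∫ t : ℝ,
          (cn j * (ptil m).coeff i) * (((t ^ i * (p (n + k - j)).eval t : ℝ)) : ℂ) ∂μ := by
        exact Finset.sum_congr rfl fun j _ =>
          integral_finset_sum _ fun i _ => hinteg j i
    _ = 0 := by
        refine Finset.sum_eq_zero fun j _ => Finset.sum_eq_zero fun i hi => ?_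
        rw [integral_const_mul]
        have hcoe : ∫ a : ℝ, ((a ^ i * (p (n + k - j)).eval a : ℝ) : ℂ) ∂μ =
            ((∫ a : ℝ, a ^ i * (p (n + k - j)).eval a ∂μ : ℝ) : ℂ) :=
          integral_ofReal (𝕜 := ℂ)
        rw [hcoe]
        have hzero : ∫ t : ℝ, t ^ i * (p (n + k - j)).eval t ∂μ = 0 := by
          have hji : (j : ℕ) ≤ k := Nat.lt_succ_iff.mp j.isLt
          have hdegXi : (Polynomial.X ^ i : Polynomial ℝ).degree < (n : ℕ) := by
            rw [Polynomial.degree_X_pow]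
            exact_mod_cast (by simp at hi; omega : i < n)
          have := intA μ hsupp p hdeg horth n (n + k - j) (Polynomial.X ^ i) hdegXi (by omega)
          rw [← this]
          exact integral_congr_ae (Filter.Eventually.of_forall fun t => by
            simp [Polynomial.eval_pow])
        rw [hzero]
        simp
end

section
/- Let n ≥ 3 and 0 ≤ r < R < 1. Define μ(Str) = (1/ω_0)∫_r^R (1-t²)^{(n-3)/2} dt and μ_n(r) = (1/ω_0)∫_r^1 (1-t²)^{(n-3)/2} dt, where ω_0 = ∫_{-1}^1 (1-t²)^{(n-3)/2} dt. Then 1 ≥ μ(Str)/μ_n(r) ≥ 1 - (2(n-2)/(1-r)) · e^{-((n-3)/2)·log((1-r²)/(1-R²))}. -/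
/-!
The strip is the cap minus the tail `∫_R^1`. The integrand is at most `(1 - R²)^p` on the
tail, which has length at most one, while on the cap it dominates `t (1 - t²)^p`, whose integral
`(1 - r²)^(p+1) / (2 (p + 1))` is explicit. The ratio of the two bounds is the exponential term.
-/

open Real intervalIntegral

section OneSubSqRpow

variable {p : ℝ}

lemma continuous_one_sub_sq_rpow (hp : 0 ≤ p) : Continuous fun t : ℝ => (1 - t ^ 2) ^ p :=
  (continuous_const.sub (continuous_pow 2)).rpow_const fun _ => Or.inr hp

lemma one_sub_sq_nonneg_of_mem_Icc {t : ℝ} (ht : t ∈ Set.Icc (-1 : ℝ) 1) :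
    0 ≤ 1 - t ^ 2 := by
  nlinarith [ht.1, ht.2]

lemma integral_one_sub_sq_rpow_le (hp : 0 ≤ p) {R : ℝ} (hR0 : 0 ≤ R) (hR1 : R ≤ 1) :
    ∫ t in R..1, (1 - t ^ 2) ^ p ≤ (1 - R ^ 2) ^ p := by
  have hbound : ∫ t in R..1, (1 - t ^ 2) ^ p ≤ ∫ _ in R..1, (1 - R ^ 2) ^ p := by
    refine integral_mono_on hR1 ((continuous_one_sub_sq_rpow hp).intervalIntegrable _ _)
      intervalIntegrable_const fun t ht => ?_
    exact rpow_le_rpow (one_sub_sq_nonneg_of_mem_Icc ⟨by linarith [ht.1], ht.2⟩)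
      (by nlinarith [ht.1]) hp
  rw [integral_const, smul_eq_mul] at hbound
  nlinarith [rpow_nonneg (show 0 ≤ 1 - R ^ 2 by nlinarith) p]

lemma hasDerivAt_one_sub_sq_rpow_succ (hp : 0 ≤ p) (t : ℝ) :
    HasDerivAt (fun s : ℝ => -(1 - s ^ 2) ^ (p + 1) / (2 * (p + 1))) (t * (1 - t ^ 2) ^ p) t := by
  have hbase : HasDerivAt (fun s : ℝ => 1 - s ^ 2) (-(2 * t)) t := by
    simpa using (hasDerivAt_pow 2 t).const_sub 1
  have hpow := ((hasDerivAt_rpow_const (x := 1 - t ^ 2) (Or.inr (by linarith : 1 ≤ p + 1))).comp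
    t hbase).neg.div_const (2 * (p + 1))
  simp only [add_sub_cancel_right, Function.comp_def] at hpow
  refine hpow.congr_deriv ?_
  field_simp

lemma integral_mul_one_sub_sq_rpow (hp : 0 ≤ p) (r : ℝ) :
    ∫ t in r..1, t * (1 - t ^ 2) ^ p = (1 - r ^ 2) ^ (p + 1) / (2 * (p + 1)) := by
  rw [integral_eq_sub_of_hasDerivAt (fun t _ => hasDerivAt_one_sub_sq_rpow_succ hp t)
    ((continuous_id.mul (continuous_one_sub_sq_rpow hp)).intervalIntegrable _ _)]
  norm_num [zero_rpow (by linarith : p + 1 ≠ 0)]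
  ring

lemma integral_one_sub_sq_rpow_ge (hp : 0 ≤ p) {r : ℝ} (hr0 : 0 ≤ r) (hr1 : r ≤ 1) :
    (1 - r) * (1 - r ^ 2) ^ p / (2 * (p + 1)) ≤ ∫ t in r..1, (1 - t ^ 2) ^ p := by
  have hcap : (1 - r ^ 2) ^ (p + 1) / (2 * (p + 1)) ≤ ∫ t in r..1, (1 - t ^ 2) ^ p := by
    rw [← integral_mul_one_sub_sq_rpow hp]
    refine integral_mono_on hr1
      ((continuous_id.mul (continuous_one_sub_sq_rpow hp)).intervalIntegrable _ _)
      ((continuous_one_sub_sq_rpow hp).intervalIntegrable _ _) fun t ht => ?_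
    exact mul_le_of_le_one_left
      (rpow_nonneg (one_sub_sq_nonneg_of_mem_Icc ⟨by linarith [ht.1], ht.2⟩) p) ht.2
  refine le_trans ?_ hcap
  have hr2 : 0 ≤ 1 - r ^ 2 := by nlinarith
  rw [rpow_add' hr2 (by linarith), rpow_one, mul_comm (1 - r)]
  gcongr
  nlinarith

lemma integral_one_sub_sq_rpow_pos (hp : 0 ≤ p) {r : ℝ} (hr0 : -1 ≤ r) (hr1 : r < 1) :
    0 < ∫ t in r..1, (1 - t ^ 2) ^ p :=
  intervalIntegral_pos_of_pos_on ((continuous_one_sub_sq_rpow hp).intervalIntegrable _ _)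
    (fun t ht => rpow_pos_of_pos (by nlinarith [ht.1, ht.2]) p) hr1

lemma integral_tail_div_integral_cap_le (hp : 0 ≤ p) {r R : ℝ} (hr0 : 0 ≤ r) (hrR : r ≤ R)
    (hR1 : R < 1) :
    (∫ t in R..1, (1 - t ^ 2) ^ p) / (∫ t in r..1, (1 - t ^ 2) ^ p) ≤
      2 * (p + 1) / (1 - r) * ((1 - R ^ 2) ^ p / (1 - r ^ 2) ^ p) := by
  have hr1 : 0 < 1 - r := by linarith
  have hr2 : 0 < 1 - r ^ 2 := by nlinarith
  calc (∫ t in R..1, (1 - t ^ 2) ^ p) / (∫ t in r..1, (1 - t ^ 2) ^ p)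
      ≤ (1 - R ^ 2) ^ p / ((1 - r) * (1 - r ^ 2) ^ p / (2 * (p + 1))) :=
        div_le_div₀ (rpow_nonneg (by nlinarith) p)
          (integral_one_sub_sq_rpow_le hp (hr0.trans hrR) hR1.le)
          (by have := rpow_pos_of_pos hr2 p; positivity)
          (integral_one_sub_sq_rpow_ge hp hr0 (by linarith))
    _ = 2 * (p + 1) / (1 - r) * ((1 - R ^ 2) ^ p / (1 - r ^ 2) ^ p) := by
        field_simp

end OneSubSqRpow

lemma exp_neg_mul_log_div {a b : ℝ} (ha : 0 < a) (hb : 0 < b) (p : ℝ) :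
    exp (-p * log (a / b)) = b ^ p / a ^ p := by
  rw [← div_rpow hb.le ha.le, rpow_def_of_pos (div_pos hb ha), ← inv_div, log_inv]
  ring_nf

theorem strip_vs_cap_measure (n : ℕ) (hn : 3 ≤ n) (r R : ℝ) (hr0 : 0 ≤ r) (hrR : r < R)
    (hR1 : R < 1) :
    (∫ t in r..R, (1 - t ^ 2) ^ (((n : ℝ) - 3) / 2)) /
        (∫ t in r..1, (1 - t ^ 2) ^ (((n : ℝ) - 3) / 2)) ≤ 1 ∧
    1 - 2 * ((n : ℝ) - 2) / (1 - r) *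
        Real.exp (-(((n : ℝ) - 3) / 2) * Real.log ((1 - r ^ 2) / (1 - R ^ 2))) ≤
      (∫ t in r..R, (1 - t ^ 2) ^ (((n : ℝ) - 3) / 2)) /
        ∫ t in r..1, (1 - t ^ 2) ^ (((n : ℝ) - 3) / 2) := by
  set p : ℝ := ((n : ℝ) - 3) / 2 with hp_def
  have hn3 : (3 : ℝ) ≤ n := by exact_mod_cast hn
  have hp : 0 ≤ p := by positivity
  have hr1 : r < 1 := hrR.trans hR1
  have hint (a b : ℝ) : IntervalIntegrable (fun t => (1 - t ^ 2) ^ p) MeasureTheory.volume a b :=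
    (continuous_one_sub_sq_rpow hp).intervalIntegrable a b
  have hsplit : ∫ t in r..R, (1 - t ^ 2) ^ p =
      (∫ t in r..1, (1 - t ^ 2) ^ p) - ∫ t in R..1, (1 - t ^ 2) ^ p :=
    eq_sub_of_add_eq (integral_add_adjacent_intervals (hint r R) (hint R 1))
  have hcap_pos := integral_one_sub_sq_rpow_pos hp (by linarith) hr1
  have htail_nonneg : 0 ≤ ∫ t in R..1, (1 - t ^ 2) ^ p :=
    integral_nonneg hR1.le fun t ht => rpow_nonneg (by nlinarith [ht.1, ht.2]) p
  have hcoeff : 2 * (p + 1) / (1 - r) ≤ 2 * ((n : ℝ) - 2) / (1 - r) :=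
    div_le_div_of_nonneg_right (by linarith [hp_def]) (by linarith)
  have h1r2 : 0 < 1 - r ^ 2 := by nlinarith
  have h1R2 : 0 < 1 - R ^ 2 := by nlinarith
  have htail_ratio := (integral_tail_div_integral_cap_le hp hr0 hrR.le hR1).trans
    (mul_le_mul_of_nonneg_right hcoeff (div_nonneg (rpow_nonneg h1R2.le p) (rpow_nonneg h1r2.le p)))
  rw [← exp_neg_mul_log_div h1r2 h1R2] at htail_ratio
  rw [hsplit, sub_div, div_self hcap_pos.ne']
  constructor <;> linarith [div_nonneg htail_nonneg hcap_pos.le]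
end

section
/- Let 0 < θ < θ' ≤ π be angles and M(n,θ) the maximal size of a θ-spherical code in S^{n-1}. Suppose Str(z) ⊆ S^{n-1} is a measurable set for each z ∈ S^{n-1}, invariant in the sense that x ∈ Str(z) iff z ∈ Str(x), with common measure μ(Str) > 0 (independent of z), and suppose that any θ-spherical code contained in a single Str(z) has at most M' elements. Then M(n,θ) ≤ M'/μ(Str). -/
open MeasureTheory RealInnerProductSpace

theorem code_bound_via_strips (n : ℕ) (θ θ' : ℝ) (hθ : 0 < θ) (hθθ' : θ < θ')
    (hθ' : θ' ≤ Real.pi)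
    (μ : Measure (Metric.sphere (0 : EuclideanSpace ℝ (Fin n)) 1))
    [IsProbabilityMeasure μ]
    (Str : Metric.sphere (0 : EuclideanSpace ℝ (Fin n)) 1 →
      Set (Metric.sphere (0 : EuclideanSpace ℝ (Fin n)) 1))
    (hmeas : ∀ z, MeasurableSet (Str z))
    (hsym : ∀ x z, x ∈ Str z ↔ z ∈ Str x)
    (m : ℝ) (hm : 0 < m) (hμStr : ∀ z, (μ (Str z)).toReal = m)
    (M' : ℕ)
    (hlocal : ∀ z, ∀ B : Finset (Metric.sphere (0 : EuclideanSpace ℝ (Fin n)) 1),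
      (↑B : Set (Metric.sphere (0 : EuclideanSpace ℝ (Fin n)) 1)) ⊆ Str z →
      (∀ x ∈ B, ∀ y ∈ B, x ≠ y →
        ⟪(x : EuclideanSpace ℝ (Fin n)), (y : EuclideanSpace ℝ (Fin n))⟫ ≤ Real.cos θ) →
      B.card ≤ M')
    (A : Finset (Metric.sphere (0 : EuclideanSpace ℝ (Fin n)) 1))
    (hA : ∀ x ∈ A, ∀ y ∈ A, x ≠ y →
      ⟪(x : EuclideanSpace ℝ (Fin n)), (y : EuclideanSpace ℝ (Fin n))⟫ ≤ Real.cos θ) :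
    (A.card : ℝ) ≤ M' / m := by
  classical
  -- Double counting with the lintegral.
  have hfin : ∀ z, μ (Str z) ≠ ⊤ := fun z => (measure_lt_top μ _).ne
  have key : ∑ x ∈ A, μ (Str x) ≤ (M' : ENNReal) := by
    have h1 : ∑ x ∈ A, μ (Str x)
        = ∫⁻ z, (∑ x ∈ A, (Str x).indicator (fun _ => (1 : ENNReal)) z) ∂μ := by
      symm
      refine (lintegral_finset_sum A fun x _ =>
        (measurable_one.indicator (hmeas x))).trans ?_
      refine Finset.sum_congr rfl fun x _ => ?_
      exact lintegral_indicator_one (hmeas x)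
    have h2 : ∀ z, (∑ x ∈ A, (Str x).indicator (fun _ => (1 : ENNReal)) z)
        ≤ (M' : ENNReal) := by
      intro z
      have : (∑ x ∈ A, (Str x).indicator (fun _ => (1 : ENNReal)) z)
          = ((A.filter fun x => x ∈ Str z).card : ENNReal) := by
        rw [Finset.card_filter]
        push_cast
        refine Finset.sum_congr rfl fun x _ => ?_
        by_cases h : x ∈ Str z
        · simp [Set.indicator, (hsym z x).mpr h, h]
        · have : z ∉ Str x := fun hz => h ((hsym z x).mp hz)
          simp [Set.indicator, this, h]
      rw [this]
      have hcard : (A.filter fun x => x ∈ Str z).card ≤ M' := by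
        refine hlocal z _ ?_ ?_
        · intro x hx
          simp only [Finset.coe_filter, Set.mem_setOf_eq] at hx
          exact hx.2
        · intro x hx y hy hxy
          exact hA x (Finset.mem_of_mem_filter x hx) y (Finset.mem_of_mem_filter y hy) hxy
      exact_mod_cast hcard
    calc ∑ x ∈ A, μ (Str x)
        = ∫⁻ z, (∑ x ∈ A, (Str x).indicator (fun _ => (1 : ENNReal)) z) ∂μ := h1
      _ ≤ ∫⁻ _, (M' : ENNReal) ∂μ := lintegral_mono h2
      _ = (M' : ENNReal) := by simp
  -- take toReal
  have hsum : (∑ x ∈ A, μ (Str x)).toReal = A.card * m := by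
    rw [ENNReal.toReal_sum (fun x _ => hfin x)]
    simp [hμStr, Finset.sum_const, nsmul_eq_mul]
  have hreal : (A.card : ℝ) * m ≤ M' := by
    rw [← hsum]
    calc (∑ x ∈ A, μ (Str x)).toReal ≤ ((M' : ENNReal)).toReal :=
        ENNReal.toReal_mono (by simp) key
      _ = (M' : ℝ) := by simp
  rw [le_div_iff₀ hm]
  exact hreal
end

section
/- The function σ ↦ 2 - (e^σ - 1)/σ (extended by the value 1 at σ = 0) is strictly decreasing and concave on (0,∞), equals 1 at σ = 0, and has a unique positive root σ₀ satisfying 1.2564 < σ₀ < 1.2565. In particular, 2 - (e^σ - 1)/σ > 0 for all 0 < σ < 1.2564. -/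
/-!
For `σ ≠ 0`, `phiCrit σ = 2 - S σ` with `S σ = ∑ σ^k/(k+1)!`. On `[0, ∞)` the series `S` is a sum
of nondecreasing convex monomials with positive coefficients whose linear term is strictly
increasing, so `S` is strictly increasing and convex and `phiCrit` is strictly decreasing and
concave there. Strict monotonicity makes a positive root unique, and the bracket
`1.2564 < σ₀ < 1.2565` comes from the intermediate value theorem and the Taylor estimates
`exp 1.2564 < 1 + 2 · 1.2564` and `1 + 2 · 1.2565 < exp 1.2565`.
-/

/-- The function σ ↦ 2 - (e^σ - 1)/σ, extended by 1 at σ = 0. -/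
noncomputable def phiCrit (σ : ℝ) : ℝ := if σ = 0 then 1 else 2 - (Real.exp σ - 1) / σ

open Set Real Nat

noncomputable def expSlope (σ : ℝ) : ℝ := ∑' k : ℕ, σ ^ k / (k + 1)!

lemma summable_pow_div_factorial_succ (σ : ℝ) :
    Summable fun k : ℕ => σ ^ k / (k + 1)! := by
  refine .of_norm_bounded (Real.summable_pow_div_factorial |σ|) fun k => ?_
  rw [norm_div, norm_pow, Real.norm_eq_abs, RCLike.norm_natCast]
  gcongr
  exact k.le_succ

lemma hasSum_mul_pow_div_factorial_succ (σ : ℝ) :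
    HasSum (fun k : ℕ => σ * (σ ^ k / (k + 1)!)) (exp σ - 1) := by
  have h := (hasSum_nat_add_iff' 1).2 (NormedSpace.expSeries_div_hasSum_exp σ)
  simp only [Finset.sum_range_one, pow_zero, Nat.factorial_zero, Nat.cast_one, div_one,
    ← Real.exp_eq_exp_ℝ] at h
  refine h.congr_fun fun k => ?_
  ring

lemma exp_sub_one_div_eq_expSlope {σ : ℝ} (hσ : σ ≠ 0) : (exp σ - 1) / σ = expSlope σ := by
  refine ((hasSum_mul_pow_div_factorial_succ σ).div_const σ).tsum_eq.symm.trans ?_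
  simp only [mul_div_cancel_left₀ _ hσ, expSlope]

lemma phiCrit_eq_two_sub_expSlope {σ : ℝ} (hσ : σ ≠ 0) : phiCrit σ = 2 - expSlope σ := by
  rw [phiCrit, if_neg hσ, exp_sub_one_div_eq_expSlope hσ]

lemma expSlope_strictMonoOn : StrictMonoOn expSlope (Ici 0) := by
  intro a (ha : 0 ≤ a) b _ hab
  refine Summable.tsum_lt_tsum_of_nonneg (i := 1) (fun k => by positivity)
    (fun k => by gcongr) ?_ (summable_pow_div_factorial_succ b)
  simpa only [pow_one] using div_lt_div_of_pos_right hab (by positivity)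

lemma ConvexOn.tsum {E ι : Type*} [AddCommGroup E] [Module ℝ E] {s : Set E} {f : ι → E → ℝ}
    (hs : Convex ℝ s) (hf : ∀ i, ConvexOn ℝ s (f i))
    (hsum : ∀ x ∈ s, Summable fun i => f i x) :
    ConvexOn ℝ s fun x => ∑' i, f i x := by
  refine ⟨hs, fun x hx y hy a b ha hb hab => ?_⟩
  calc ∑' i, f i (a • x + b • y)
      ≤ ∑' i, (a • f i x + b • f i y) :=
        Summable.tsum_le_tsum (fun i => (hf i).2 hx hy ha hb hab) (hsum _ (hs hx hy ha hb hab))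
          (((hsum x hx).mul_left a).add ((hsum y hy).mul_left b))
    _ = a • ∑' i, f i x + b • ∑' i, f i y := by
        simp only [smul_eq_mul]
        rw [((hsum x hx).mul_left a).tsum_add ((hsum y hy).mul_left b), tsum_mul_left,
          tsum_mul_left]

lemma expSlope_convexOn : ConvexOn ℝ (Ici 0) expSlope :=
  ConvexOn.tsum (convex_Ici 0)
    (fun k => ((convexOn_pow k).smul (c := ((k + 1)! : ℝ)⁻¹) (by positivity)).congr
      fun σ _ => by simp only [smul_eq_mul, inv_mul_eq_div])
    (fun σ _ => summable_pow_div_factorial_succ σ)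

lemma phiCrit_strictAntiOn : StrictAntiOn phiCrit (Ioi 0) := by
  intro a (ha : 0 < a) b (hb : 0 < b) hab
  rw [phiCrit_eq_two_sub_expSlope ha.ne', phiCrit_eq_two_sub_expSlope hb.ne']
  linarith [expSlope_strictMonoOn (mem_Ici.2 ha.le) (mem_Ici.2 hb.le) hab]

lemma phiCrit_concaveOn : ConcaveOn ℝ (Ioi 0) phiCrit :=
  ((concaveOn_const 2 (convex_Ioi 0)).sub (expSlope_convexOn.subset Ioi_subset_Ici_self
    (convex_Ioi 0))).congr fun _ hσ => (phiCrit_eq_two_sub_expSlope (ne_of_gt hσ)).symm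

lemma phiCrit_continuousOn : ContinuousOn phiCrit (Ioi 0) := by
  refine ContinuousOn.congr (f := fun σ => 2 - (exp σ - 1) / σ) ?_ fun σ (hσ : 0 < σ) => ?_
  · exact continuousOn_const.sub ((continuous_exp.sub continuous_const).continuousOn.div
      continuousOn_id fun σ hσ => ne_of_gt hσ)
  · rw [phiCrit, if_neg hσ.ne']

-- `exp_bound'` needs an argument in `[0, 1]`, hence the halving.
lemma exp_1_2564_lt : exp 1.2564 < 3.5128 := by
  have half : exp 0.6282 ≤ 1.87424 := by
    refine (Real.exp_bound' (by norm_num) (by norm_num) (n := 7) (by norm_num)).trans ?_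
    norm_num [Finset.sum_range_succ, Nat.factorial]
  calc exp 1.2564 = exp 0.6282 * exp 0.6282 := by rw [← exp_add]; norm_num
    _ ≤ 1.87424 * 1.87424 := mul_le_mul half half (exp_pos _).le (by norm_num)
    _ < 3.5128 := by norm_num

lemma lt_exp_1_2565 : 3.5130 < exp 1.2565 := by
  refine lt_of_lt_of_le ?_ (Real.sum_le_exp_of_nonneg (by norm_num) 12)
  norm_num [Finset.sum_range_succ, Nat.factorial]

lemma phiCrit_1_2564_pos : 0 < phiCrit 1.2564 := by
  rw [phiCrit, if_neg (by norm_num), sub_pos, div_lt_iff₀ (by norm_num)]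
  linarith [exp_1_2564_lt]

lemma phiCrit_1_2565_neg : phiCrit 1.2565 < 0 := by
  rw [phiCrit, if_neg (by norm_num), sub_neg, lt_div_iff₀ (by norm_num)]
  linarith [lt_exp_1_2565]

theorem phiCrit_properties :
    StrictAntiOn phiCrit (Set.Ioi 0) ∧
    ConcaveOn ℝ (Set.Ioi 0) phiCrit ∧
    phiCrit 0 = 1 ∧
    (∃ σ₀ : ℝ, 1.2564 < σ₀ ∧ σ₀ < 1.2565 ∧ phiCrit σ₀ = 0 ∧
      ∀ σ : ℝ, 0 < σ → phiCrit σ = 0 → σ = σ₀) ∧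
    ∀ σ : ℝ, 0 < σ → σ < 1.2564 → 0 < phiCrit σ := by
  have pos : (0 : ℝ) < 1.2564 := by norm_num
  obtain ⟨σ₀, ⟨hlo, hhi⟩, hroot⟩ : ∃ σ₀ ∈ Ioo (1.2564 : ℝ) 1.2565, phiCrit σ₀ = 0 :=
    intermediate_value_Ioo' (by norm_num)
      (phiCrit_continuousOn.mono fun σ hσ => pos.trans_le hσ.1)
      ⟨phiCrit_1_2565_neg, phiCrit_1_2564_pos⟩
  refine ⟨phiCrit_strictAntiOn, phiCrit_concaveOn, if_pos rfl,
    ⟨σ₀, hlo, hhi, hroot, fun σ hσ hσroot => ?_⟩, fun σ hσ hlt => ?_⟩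
  · exact phiCrit_strictAntiOn.injOn hσ (pos.trans hlo) (hσroot.trans hroot.symm)
  · exact phiCrit_1_2564_pos.trans (phiCrit_strictAntiOn hσ pos hlt)
end

section
/- The function G(θ) = cos θ · log((1+sin θ)/(1−sin θ)) − (1+cos θ) sin θ has exactly one root θ* in the open interval (0, π/2), and this root satisfies 1.0995 < θ* < 1.0996 (in radians, i.e., θ* ≈ 62.997°). Moreover G(θ) > 0 for 0 < θ < θ* and G(θ) < 0 for θ* < θ < π/2. -/
/-!
Write `G θ = cos θ · F θ` with `F θ = log ((1 + sin θ) / (1 - sin θ)) - tan θ - sin θ`. Then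
`F 0 = 0` and `F' = 2 / cos - 1 / cos² - cos = (1 - cos) (cos - φ⁻¹) (cos + φ) / cos²`, so `F`
increases on `[0, arccos φ⁻¹]` and decreases on `[arccos φ⁻¹, π / 2)`. Hence `F` has a single root
in `(0, π / 2)`, positive to its left and negative to its right, and the root lies in
`(1.0995, 1.0996)` because `F` changes sign there. That sign change is certified by the alternating
Taylor bounds for `sin` and `cos`, obtained by integrating `cos ≤ 1` repeatedly, and by the Taylor
bounds for `exp`.
-/

open Real Set Finset

section Taylor

open scoped Nat

noncomputable def cosTaylor (n : ℕ) (x : ℝ) : ℝ := ∑ k ∈ range n, (-1) ^ k * x ^ (2 * k) / (2 * k)!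

noncomputable def sinTaylor (n : ℕ) (x : ℝ) : ℝ :=
  ∑ k ∈ range n, (-1) ^ k * x ^ (2 * k + 1) / (2 * k + 1)!

theorem hasDerivAt_pow_succ_div_factorial (m : ℕ) (x : ℝ) :
    HasDerivAt (fun y : ℝ => y ^ (m + 1) / (m + 1)!) (x ^ m / m !) x := by
  refine ((hasDerivAt_pow (m + 1) x).div_const _).congr_deriv ?_
  rw [Nat.factorial_succ]
  push_cast
  field_simp

theorem hasDerivAt_sinTaylor (n : ℕ) (x : ℝ) : HasDerivAt (sinTaylor n) (cosTaylor n x) x := by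
  induction n with
  | zero =>
    have h : sinTaylor 0 = fun _ => 0 := funext fun _ => sum_range_zero _
    simpa [h, cosTaylor] using hasDerivAt_const x (0 : ℝ)
  | succ n ih =>
    have h : sinTaylor (n + 1) =
        fun y => sinTaylor n y + (-1) ^ n * (y ^ (2 * n + 1) / (2 * n + 1)!) :=
      funext fun y => by simp only [sinTaylor, sum_range_succ]; ring
    rw [h]
    refine (ih.add ((hasDerivAt_pow_succ_div_factorial (2 * n) x).const_mul _)).congr_deriv ?_
    simp only [cosTaylor, sum_range_succ]
    ring

theorem hasDerivAt_cosTaylor_succ (n : ℕ) (x : ℝ) :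
    HasDerivAt (cosTaylor (n + 1)) (-sinTaylor n x) x := by
  induction n with
  | zero =>
    have h : cosTaylor 1 = fun _ => 1 := funext fun _ => by simp [cosTaylor]
    simpa [h, sinTaylor] using hasDerivAt_const x (1 : ℝ)
  | succ n ih =>
    have h : cosTaylor (n + 2) = fun y =>
        cosTaylor (n + 1) y + (-1) ^ (n + 1) * (y ^ (2 * n + 1 + 1) / (2 * n + 1 + 1)!) :=
      funext fun y => by simp only [cosTaylor, sum_range_succ]; ring_nf
    rw [h]
    refine (ih.add ((hasDerivAt_pow_succ_div_factorial (2 * n + 1) x).const_mul _)).congr_deriv ?_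
    simp only [sinTaylor, sum_range_succ]
    ring

theorem sinTaylor_zero_right (n : ℕ) : sinTaylor n 0 = 0 := by simp [sinTaylor]

theorem cosTaylor_succ_zero_right (n : ℕ) : cosTaylor (n + 1) 0 = 1 := by
  simp [cosTaylor, sum_range_succ']

theorem nonneg_of_hasDerivAt_of_nonneg {f f' : ℝ → ℝ} (hf : ∀ x, HasDerivAt f (f' x) x)
    (hf₀ : f 0 = 0) (hf' : ∀ x, 0 ≤ x → 0 ≤ f' x) {x : ℝ} (hx : 0 ≤ x) : 0 ≤ f x := by
  have hmono : MonotoneOn f (Ici 0) :=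
    monotoneOn_of_hasDerivWithinAt_nonneg (convex_Ici 0)
      (fun y _ => (hf y).continuousAt.continuousWithinAt) (fun y _ => (hf y).hasDerivWithinAt)
      (fun y hy => hf' y (interior_subset hy))
  simpa [hf₀] using hmono self_mem_Ici hx hx

theorem sin_taylor_step {n : ℕ} (hcos : ∀ x, 0 ≤ x → 0 ≤ (-1) ^ n * (cos x - cosTaylor n x))
    {x : ℝ} (hx : 0 ≤ x) : 0 ≤ (-1) ^ n * (sin x - sinTaylor n x) :=
  nonneg_of_hasDerivAt_of_nonneg
    (fun y => ((hasDerivAt_sin y).sub (hasDerivAt_sinTaylor n y)).const_mul _)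
    (by simp [sinTaylor_zero_right]) hcos hx

theorem cos_taylor_step {n : ℕ} (hsin : ∀ x, 0 ≤ x → 0 ≤ (-1) ^ n * (sin x - sinTaylor n x))
    {x : ℝ} (hx : 0 ≤ x) : 0 ≤ (-1) ^ (n + 1) * (cos x - cosTaylor (n + 1) x) :=
  nonneg_of_hasDerivAt_of_nonneg
    (fun y => (((hasDerivAt_cos y).sub (hasDerivAt_cosTaylor_succ n y)).const_mul _).congr_deriv
      (by ring))
    (by simp [cosTaylor_succ_zero_right]) hsin hx

theorem cos_sin_taylor_alternating (n : ℕ) {x : ℝ} (hx : 0 ≤ x) :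
    0 ≤ (-1) ^ (n + 1) * (cos x - cosTaylor (n + 1) x) ∧
      0 ≤ (-1) ^ (n + 1) * (sin x - sinTaylor (n + 1) x) := by
  induction n generalizing x with
  | zero =>
    have hcos : ∀ y, 0 ≤ y → 0 ≤ (-1) ^ 1 * (cos y - cosTaylor 1 y) := fun y _ => by
      simpa [cosTaylor] using cos_le_one y
    exact ⟨hcos x hx, sin_taylor_step hcos hx⟩
  | succ n ih =>
    have hcos : ∀ y, 0 ≤ y → 0 ≤ (-1) ^ (n + 2) * (cos y - cosTaylor (n + 2) y) :=
      fun y hy => cos_taylor_step (fun z hz => (ih hz).2) hy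
    exact ⟨hcos x hx, sin_taylor_step hcos hx⟩

end Taylor

open scoped goldenRatio

theorem one_half_lt_inv_goldenRatio : 1 / 2 < φ⁻¹ := by
  rw [one_div]
  exact (inv_lt_inv₀ two_pos goldenRatio_pos).2 goldenRatio_lt_two

theorem cos_arccos_inv_goldenRatio : cos (arccos φ⁻¹) = φ⁻¹ :=
  cos_arccos (by linarith [one_half_lt_inv_goldenRatio])
    (inv_lt_one_of_one_lt₀ one_lt_goldenRatio).le

theorem arccos_inv_goldenRatio_lt_pi_div_three : arccos φ⁻¹ < π / 3 := by
  have h := arccos_lt_arccos (by norm_num) one_half_lt_inv_goldenRatio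
    (inv_lt_one_of_one_lt₀ one_lt_goldenRatio).le
  rwa [← cos_pi_div_three, arccos_cos (by positivity) (by linarith [pi_pos])] at h

theorem exists_root_of_strictMonoOn_of_strictAntiOn {f : ℝ → ℝ} {a m b p q : ℝ}
    (hfa : f a = 0) (hmono : StrictMonoOn f (Icc a m)) (hanti : StrictAntiOn f (Ico m b))
    (hmp : m ≤ p) (hpq : p ≤ q) (hqb : q < b) (hcont : ContinuousOn f (Icc p q))
    (hp : 0 < f p) (hq : f q < 0) :
    ∃ r ∈ Ioo p q, f r = 0 ∧ (∀ x ∈ Ioo a r, 0 < f x) ∧ ∀ x ∈ Ioo r b, f x < 0 := by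
  obtain ⟨r, hr, hfr⟩ := intermediate_value_Ioo' hpq hcont ⟨hq, hp⟩
  have hrm : r ∈ Ico m b := ⟨hmp.trans hr.1.le, hr.2.trans hqb⟩
  refine ⟨r, hr, hfr, fun x hx => ?_, fun x hx => ?_⟩
  · rcases le_or_gt x m with hxm | hxm
    · simpa [hfa] using hmono ⟨le_rfl, hx.1.le.trans hxm⟩ ⟨hx.1.le, hxm⟩ hx.1
    · simpa [hfr] using hanti ⟨hxm.le, hx.2.trans hrm.2⟩ hrm hx.2
  · simpa [hfr] using hanti hrm ⟨hrm.1.trans hx.1.le, hx.2⟩ hx.1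

theorem hasDerivAt_log_one_add_sin_div_one_sub_sin {θ : ℝ} (hc : cos θ ≠ 0) :
    HasDerivAt (fun θ => log ((1 + sin θ) / (1 - sin θ))) (2 / cos θ) θ := by
  have hsin : sin θ ^ 2 < 1 := by
    have : 0 < cos θ ^ 2 := by positivity
    linarith [sin_sq_add_cos_sq θ]
  have hplus : 1 + sin θ ≠ 0 := by nlinarith
  have hminus : 1 - sin θ ≠ 0 := by nlinarith
  refine ((((hasDerivAt_sin θ).const_add 1).fun_div ((hasDerivAt_sin θ).const_sub 1) hminus).log
    (div_ne_zero hplus hminus)).congr_deriv ?_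
  field_simp
  linear_combination 2 * sin_sq_add_cos_sq θ

theorem exp_2_85332_lt : exp 2.85332 < 17.3453 := by
  have h := exp_bound' (x := 2.85332 / 4) (by norm_num) (by norm_num) (n := 12) (by norm_num)
  calc exp 2.85332 = exp (2.85332 / 4) ^ 4 := by rw [← exp_nat_mul]; norm_num
    _ ≤ _ := pow_le_pow_left₀ (exp_pos _).le h 4
    _ < 17.3453 := by norm_num [sum_range_succ, Nat.factorial]

theorem lt_exp_2_8538 : 17.3536 < exp 2.8538 := by
  have h := sum_le_exp_of_nonneg (x := 2.8538 / 4) (by norm_num) 12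
  calc (17.3536 : ℝ) < _ := by norm_num [sum_range_succ, Nat.factorial]
    _ ≤ exp (2.8538 / 4) ^ 4 := pow_le_pow_left₀ (by positivity) h 4
    _ = exp 2.8538 := by rw [← exp_nat_mul]; norm_num

theorem sin_cos_bounds_1_0995 :
    0.89098045 ≤ sin 1.0995 ∧ sin 1.0995 ≤ 0.89098046 ∧ 0.45404166 ≤ cos 1.0995 := by
  have hx : (0 : ℝ) ≤ 1.0995 := by norm_num
  obtain ⟨hcos, hsin⟩ := cos_sin_taylor_alternating 5 hx
  have hsin' := (cos_sin_taylor_alternating 6 hx).2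
  norm_num [cosTaylor, sinTaylor, sum_range_succ, Nat.factorial] at hcos hsin hsin'
  exact ⟨by linarith, by linarith, by linarith⟩

theorem sin_cos_bounds_1_0996 :
    0.89102584 ≤ sin 1.0996 ∧ sin 1.0996 ≤ 0.891026 ∧ cos 1.0996 ≤ 0.45395257 := by
  have hx : (0 : ℝ) ≤ 1.0996 := by norm_num
  have hsin := (cos_sin_taylor_alternating 5 hx).2
  obtain ⟨hcos, hsin'⟩ := cos_sin_taylor_alternating 6 hx
  norm_num [cosTaylor, sinTaylor, sum_range_succ, Nat.factorial] at hcos hsin hsin'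
  exact ⟨by linarith, by linarith, by linarith⟩

namespace ThetaStar

noncomputable def F (θ : ℝ) : ℝ := log ((1 + sin θ) / (1 - sin θ)) - tan θ - sin θ

theorem cos_mul_F {θ : ℝ} (hc : cos θ ≠ 0) :
    cos θ * F θ = cos θ * log ((1 + sin θ) / (1 - sin θ)) - (1 + cos θ) * sin θ := by
  rw [F, tan_eq_sin_div_cos]
  field_simp
  ring

theorem F_zero : F 0 = 0 := by simp [F]

theorem hasDerivAt_F {θ : ℝ} (hc : cos θ ≠ 0) :
    HasDerivAt F ((1 - cos θ) * (cos θ - φ⁻¹) * (cos θ + φ) / cos θ ^ 2) θ := by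
  refine (((hasDerivAt_log_one_add_sin_div_one_sub_sin hc).sub (hasDerivAt_tan hc)).sub
    (hasDerivAt_sin θ)).congr_deriv ?_
  rw [inv_goldenRatio]
  field_simp
  linear_combination (1 - cos θ) * sq_sqrt (show (0 : ℝ) ≤ 5 by norm_num)

theorem F_continuousOn : ContinuousOn F (Ioo (-(π / 2)) (π / 2)) := fun _ hx =>
  (hasDerivAt_F (cos_pos_of_mem_Ioo hx).ne').continuousAt.continuousWithinAt

theorem F_strictMonoOn : StrictMonoOn F (Icc 0 (arccos φ⁻¹)) := by
  have hθ₁ : arccos φ⁻¹ < π / 2 := by linarith [arccos_inv_goldenRatio_lt_pi_div_three, pi_pos]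
  have hsub : Icc 0 (arccos φ⁻¹) ⊆ Ioo (-(π / 2)) (π / 2) := fun x hx =>
    ⟨by linarith [pi_pos, hx.1], hx.2.trans_lt hθ₁⟩
  refine strictMonoOn_of_hasDerivWithinAt_pos (convex_Icc _ _) (F_continuousOn.mono hsub)
    (fun x hx =>
      (hasDerivAt_F (cos_pos_of_mem_Ioo (hsub (interior_subset hx))).ne').hasDerivWithinAt)
    (fun x hx => ?_)
  rw [interior_Icc] at hx
  have hcos_pos := cos_pos_of_mem_Ioo (hsub (Ioo_subset_Icc_self hx))
  have hcos_lt_one : cos x < 1 := by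
    simpa using cos_lt_cos_of_nonneg_of_le_pi_div_two le_rfl (hx.2.trans hθ₁).le hx.1
  have hcos_gt : φ⁻¹ < cos x :=
    cos_arccos_inv_goldenRatio ▸ cos_lt_cos_of_nonneg_of_le_pi_div_two hx.1.le hθ₁.le hx.2
  have := goldenRatio_pos
  exact div_pos (mul_pos (mul_pos (by linarith) (by linarith)) (by linarith)) (by positivity)

theorem F_strictAntiOn : StrictAntiOn F (Ico (arccos φ⁻¹) (π / 2)) := by
  have hsub : Ico (arccos φ⁻¹) (π / 2) ⊆ Ioo (-(π / 2)) (π / 2) := fun x hx =>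
    ⟨by linarith [pi_pos, hx.1, arccos_nonneg φ⁻¹], hx.2⟩
  refine strictAntiOn_of_hasDerivWithinAt_neg (convex_Ico _ _) (F_continuousOn.mono hsub)
    (fun x hx =>
      (hasDerivAt_F (cos_pos_of_mem_Ioo (hsub (interior_subset hx))).ne').hasDerivWithinAt)
    (fun x hx => ?_)
  rw [interior_Ico] at hx
  have hx₀ : 0 < x := (arccos_pos.2 (inv_lt_one_of_one_lt₀ one_lt_goldenRatio)).trans hx.1
  have hcos_pos := cos_pos_of_mem_Ioo (hsub (Ioo_subset_Ico_self hx))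
  have hcos_lt_one : cos x < 1 := by
    simpa using cos_lt_cos_of_nonneg_of_le_pi_div_two le_rfl hx.2.le hx₀
  have hcos_lt : cos x < φ⁻¹ :=
    cos_arccos_inv_goldenRatio ▸
      cos_lt_cos_of_nonneg_of_le_pi_div_two (arccos_nonneg _) hx.2.le hx.1
  have := goldenRatio_pos
  exact div_neg_of_neg_of_pos
    (mul_neg_of_neg_of_pos (mul_neg_of_pos_of_neg (by linarith) (by linarith)) (by linarith))
    (by positivity)

-- 2.85332 separates `tan + sin ≈ 2.8533124` from `log ((1 + sin) / (1 - sin)) ≈ 2.8533235`.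
theorem F_pos : 0 < F 1.0995 := by
  obtain ⟨hsin_ge, hsin_le, hcos_ge⟩ := sin_cos_bounds_1_0995
  have htan : tan 1.0995 + sin 1.0995 < 2.85332 := by
    have : sin 1.0995 / cos 1.0995 ≤ 0.89098046 / 0.45404166 :=
      div_le_div₀ (by norm_num) hsin_le (by norm_num) hcos_ge
    rw [tan_eq_sin_div_cos]
    linarith
  have hlog : 2.85332 < log ((1 + sin 1.0995) / (1 - sin 1.0995)) := by
    rw [lt_log_iff_exp_lt (div_pos (by linarith) (by linarith))]
    calc exp 2.85332 < 17.3453 := exp_2_85332_lt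
      _ ≤ (1 + sin 1.0995) / (1 - sin 1.0995) := by rw [le_div_iff₀ (by linarith)]; linarith
  rw [F]
  linarith

theorem F_neg : F 1.0996 < 0 := by
  obtain ⟨hsin_ge, hsin_le, hcos_le⟩ := sin_cos_bounds_1_0996
  have htan : 2.8538 < tan 1.0996 + sin 1.0996 := by
    have : 0.89102584 / 0.45395257 ≤ sin 1.0996 / cos 1.0996 :=
      div_le_div₀ (by linarith) hsin_ge
        (cos_pos_of_mem_Ioo ⟨by linarith [pi_pos], by linarith [pi_gt_three]⟩) hcos_le
    rw [tan_eq_sin_div_cos]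
    linarith
  have hlog : log ((1 + sin 1.0996) / (1 - sin 1.0996)) < 2.8538 := by
    rw [log_lt_iff_lt_exp (div_pos (by linarith) (by linarith))]
    calc (1 + sin 1.0996) / (1 - sin 1.0996) ≤ 17.3536 := by
          rw [div_le_iff₀ (by linarith)]; linarith
      _ < exp 2.8538 := lt_exp_2_8538
  rw [F]
  linarith

end ThetaStar

theorem unique_root_thetaStar :
    ∃ θs : ℝ, θs ∈ Set.Ioo 0 (π / 2) ∧ 1.0995 < θs ∧ θs < 1.0996 ∧
      cos θs * log ((1 + sin θs) / (1 - sin θs)) - (1 + cos θs) * sin θs = 0 ∧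
      (∀ θ ∈ Set.Ioo 0 (π / 2),
        cos θ * log ((1 + sin θ) / (1 - sin θ)) - (1 + cos θ) * sin θ = 0 → θ = θs) ∧
      (∀ θ : ℝ, 0 < θ → θ < θs →
        0 < cos θ * log ((1 + sin θ) / (1 - sin θ)) - (1 + cos θ) * sin θ) ∧
      (∀ θ : ℝ, θs < θ → θ < π / 2 →
        cos θ * log ((1 + sin θ) / (1 - sin θ)) - (1 + cos θ) * sin θ < 0) := by
  have hcos : ∀ θ ∈ Ioo 0 (π / 2), 0 < cos θ := fun θ hθ =>
    cos_pos_of_mem_Ioo ⟨by linarith [pi_pos, hθ.1], hθ.2⟩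
  have hG : ∀ θ ∈ Ioo 0 (π / 2), cos θ * log ((1 + sin θ) / (1 - sin θ)) - (1 + cos θ) * sin θ
      = cos θ * ThetaStar.F θ := fun θ hθ => (ThetaStar.cos_mul_F (hcos θ hθ).ne').symm
  obtain ⟨θs, hθs, hroot, hpos, hneg⟩ := exists_root_of_strictMonoOn_of_strictAntiOn
    ThetaStar.F_zero ThetaStar.F_strictMonoOn ThetaStar.F_strictAntiOn
    (arccos_inv_goldenRatio_lt_pi_div_three.le.trans (by linarith [pi_lt_d2]))
    (by norm_num) (by linarith [pi_gt_three])
    (ThetaStar.F_continuousOn.mono fun x hx =>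
      ⟨by linarith [pi_pos, hx.1], by linarith [pi_gt_three, hx.2]⟩)
    ThetaStar.F_pos ThetaStar.F_neg
  have hθs' : θs ∈ Ioo 0 (π / 2) := ⟨by linarith [hθs.1], by linarith [hθs.2, pi_gt_three]⟩
  refine ⟨θs, hθs', hθs.1, hθs.2, by rw [hG θs hθs', hroot, mul_zero], ?_, ?_, ?_⟩
  · intro θ hθ hθ_root
    rw [hG θ hθ] at hθ_root
    have hF := (mul_eq_zero.1 hθ_root).resolve_left (hcos θ hθ).ne'
    rcases lt_trichotomy θ θs with h | h | h
    · exact absurd hF (hpos θ ⟨hθ.1, h⟩).ne'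
    · exact h
    · exact absurd hF (hneg θ ⟨h, hθ.2⟩).ne
  · intro θ h₀ h
    have hθ : θ ∈ Ioo 0 (π / 2) := ⟨h₀, h.trans hθs'.2⟩
    rw [hG θ hθ]
    exact mul_pos (hcos θ hθ) (hpos θ ⟨h₀, h⟩)
  · intro θ h h₁
    have hθ : θ ∈ Ioo 0 (π / 2) := ⟨hθs'.1.trans h, h₁⟩
    rw [hG θ hθ]
    exact mul_neg_of_pos_of_neg (hcos θ hθ) (hneg θ ⟨h, h₁⟩)
end

section
/- Let P be a real polynomial of degree d all of whose roots t_1 > t_2 > ... > t_d are real, and let s > t_1. Then for every k ≥ 1, P^{(k+1)}(s)/P^{(k)}(s) ≤ P''(s)/P'(s), where P^{(k)} denotes the k-th derivative. Consequently, if P''(s)/P'(s) ≤ C for some C > 0, then for all k ≥ 1, P^{(k+1)}(s)/P^{(k)}(s) ≤ C, and hence for all t, |P(t) − P(s) − (t−s)P'(s)| ≤ |t−s| P'(s) · ((e^{C|t−s|} − 1)/(C|t−s|) − 1). -/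
/-!
Every derivative of a real-rooted polynomial is real-rooted (Rolle), and by the logarithmic
derivative `f'/f = ∑ 1/(x - z)` it has the sign of `f` to the right of all roots of `f`, so no
derivative vanishes there. Real-rooted polynomials satisfy Newton's inequality
`f f'' ≤ f'^2`, because `f'^2 - f f''` of a product is `g^2 (h'^2 - h h'') + h^2 (g'^2 - g g'')`.
Applied to each derivative at `s`, this makes `k ↦ P^(k)(s)` a nonnegative log-concave sequence
without internal zeros, so its ratios decrease. A bound `C` on the ratios gives
`P^(k)(s) ≤ C^(k-1) P'(s)`, and the Taylor expansion of `P` at `s` is then dominated by that of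
`P'(s) (e^(C|t - s|) - 1 - C|t - s|) / C`.
-/

open Polynomial Finset

theorem antitone_div_of_mul_le_sq {K : Type*} [Field K] [LinearOrder K] [IsStrictOrderedRing K]
    {a : ℕ → K} (ha : ∀ k, 0 ≤ a k) (hpos : ∀ k, 0 < a (k + 1) → 0 < a k)
    (hlc : ∀ k, a (k + 2) * a k ≤ a (k + 1) ^ 2) : Antitone fun k => a (k + 1) / a k := by
  refine antitone_nat_of_succ_le fun k => ?_
  rcases (ha (k + 1)).eq_or_lt with h | h
  · rw [← h, div_zero, zero_div]
  · rw [div_le_div_iff₀ h (hpos k h), ← sq]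
    exact hlc k

theorem Real.sum_Ico_two_pow_div_factorial_le_exp_sub {y : ℝ} (hy : 0 ≤ y) {N : ℕ}
    (hN : 2 ≤ N) : ∑ i ∈ Ico 2 N, y ^ i / i.factorial ≤ Real.exp y - 1 - y := by
  have h := Real.sum_le_exp_of_nonneg hy N
  rw [range_eq_Ico, ← sum_Ico_consecutive _ (Nat.zero_le 2) hN, ← range_eq_Ico] at h
  simp [sum_range_succ] at h
  linarith

namespace Polynomial

theorem Splits.eval_mul_eval_derivative_derivative_le_sq {R : Type*} [CommRing R]
    [LinearOrder R] [IsStrictOrderedRing R] {f : R[X]} (hf : f.Splits) (x : R) :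
    f.eval x * f.derivative.derivative.eval x ≤ f.derivative.eval x ^ 2 := by
  induction hf using Submonoid.closure_induction with
  | mem g hg => rcases hg with ⟨a, rfl⟩ | ⟨a, rfl⟩ <;> simp
  | one => simp
  | mul g h _ _ hg hh =>
    have key :
        (g * h).derivative.eval x ^ 2 - (g * h).eval x * (g * h).derivative.derivative.eval x =
          h.eval x ^ 2 * (g.derivative.eval x ^ 2 - g.eval x * g.derivative.derivative.eval x) +
            g.eval x ^ 2 * (h.derivative.eval x ^ 2 - h.eval x * h.derivative.derivative.eval x) := by
      simp only [derivative_mul, derivative_add, eval_add, eval_mul]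
      ring
    nlinarith [sq_nonneg (h.eval x), sq_nonneg (g.eval x)]

section RealRooted

variable {f : ℝ[X]} {x : ℝ}

theorem Splits.derivative (hf : f.Splits) : f.derivative.Splits := by
  rw [splits_iff_card_roots] at hf ⊢
  have h₁ := card_roots_le_derivative f
  have h₂ := card_roots' f.derivative
  have h₃ := natDegree_derivative_le f
  omega

theorem Splits.iterate_derivative (hf : f.Splits) (k : ℕ) :
    (Polynomial.derivative^[k] f).Splits := by
  induction k with
  | zero => exact hf
  | succ k ih => rw [Function.iterate_succ_apply']; exact ih.derivative

theorem Splits.eval_derivative_div_eval_pos (hf : f.Splits) (hdeg : 0 < f.natDegree)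
    (hx : ∀ z ∈ f.roots, z < x) : 0 < f.derivative.eval x / f.eval x := by
  have hf₀ : f ≠ 0 := ne_zero_of_natDegree_gt hdeg
  have hfx : f.eval x ≠ 0 := fun h => (hx x ((mem_roots hf₀).2 h)).false
  rw [hf.eval_derivative_div_eval_of_ne_zero hfx]
  simpa using Multiset.sum_lt_sum_of_nonempty (f := fun _ => (0 : ℝ))
    (hf.roots_ne_zero hdeg.ne') fun z hz => one_div_pos.2 (sub_pos.2 (hx z hz))

theorem Splits.roots_derivative_lt (hf : f.Splits) (hx : ∀ z ∈ f.roots, z < x) :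
    ∀ z ∈ f.derivative.roots, z < x := by
  intro z hz
  by_contra! hxz
  have hdeg : 0 < f.natDegree :=
    Nat.pos_of_ne_zero fun h => ne_zero_of_mem_roots hz (derivative_of_natDegree_zero h)
  have := hf.eval_derivative_div_eval_pos hdeg fun w hw => (hx w hw).trans_le hxz
  rw [isRoot_of_mem_roots hz, zero_div] at this
  exact this.false

theorem Splits.roots_iterate_derivative_lt (hf : f.Splits) (hx : ∀ z ∈ f.roots, z < x)
    (k : ℕ) : ∀ z ∈ (Polynomial.derivative^[k] f).roots, z < x := by
  induction k with
  | zero => exact hx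
  | succ k ih =>
    rw [Function.iterate_succ_apply']
    exact (hf.iterate_derivative k).roots_derivative_lt ih

theorem Splits.eval_derivative_nonneg (hf : f.Splits) (hx : ∀ z ∈ f.roots, z < x)
    (h : 0 ≤ f.eval x) : 0 ≤ f.derivative.eval x := by
  rcases Nat.eq_zero_or_pos f.natDegree with hdeg | hdeg
  · simp [derivative_of_natDegree_zero hdeg]
  · rcases div_pos_iff.1 (hf.eval_derivative_div_eval_pos hdeg hx) with ⟨h', -⟩ | ⟨-, h'⟩
    · exact h'.le
    · exact absurd h h'.not_ge

theorem Splits.eval_pos_of_eval_derivative_pos (hf : f.Splits) (hx : ∀ z ∈ f.roots, z < x)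
    (h : 0 < f.derivative.eval x) : 0 < f.eval x := by
  have hdeg : 0 < f.natDegree := Nat.pos_of_ne_zero fun h₀ => by
    simp [derivative_of_natDegree_zero h₀] at h
  rcases div_pos_iff.1 (hf.eval_derivative_div_eval_pos hdeg hx) with ⟨-, h'⟩ | ⟨h', -⟩
  · exact h'
  · exact absurd h h'.not_gt

theorem Splits.eval_iterate_derivative_nonneg (hf : f.Splits) (hx : ∀ z ∈ f.roots, z < x)
    (h : 0 ≤ f.eval x) (k : ℕ) : 0 ≤ (Polynomial.derivative^[k] f).eval x := by
  induction k with
  | zero => exact h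
  | succ k ih =>
    rw [Function.iterate_succ_apply']
    exact (hf.iterate_derivative k).eval_derivative_nonneg (hf.roots_iterate_derivative_lt hx k) ih

theorem Splits.eval_iterate_derivative_pos_of_succ (hf : f.Splits) (hx : ∀ z ∈ f.roots, z < x)
    {k : ℕ} (h : 0 < (Polynomial.derivative^[k + 1] f).eval x) :
    0 < (Polynomial.derivative^[k] f).eval x := by
  rw [Function.iterate_succ_apply'] at h
  exact (hf.iterate_derivative k).eval_pos_of_eval_derivative_pos
    (hf.roots_iterate_derivative_lt hx k) h

theorem Splits.antitone_eval_iterate_derivative_div (hf : f.Splits) (hx : ∀ z ∈ f.roots, z < x)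
    (h : 0 ≤ f.eval x) :
    Antitone fun k => (Polynomial.derivative^[k + 1] f).eval x /
      (Polynomial.derivative^[k] f).eval x := by
  refine antitone_div_of_mul_le_sq (hf.eval_iterate_derivative_nonneg hx h)
    (fun k => hf.eval_iterate_derivative_pos_of_succ hx) fun k => ?_
  rw [mul_comm, Function.iterate_succ_apply', Function.iterate_succ_apply']
  exact (hf.iterate_derivative k).eval_mul_eval_derivative_derivative_le_sq x

end RealRooted

theorem eval_eq_sum_range_iterate_derivative {K : Type*} [Field K] [CharZero K] {f : K[X]}
    {N : ℕ} (hN : f.natDegree < N) (x y : K) :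
    f.eval y = ∑ i ∈ range N, (derivative^[i] f).eval x / i.factorial * (y - x) ^ i := by
  rw [← taylor_eval_sub x f y, eval_eq_sum_range' (by rwa [natDegree_taylor])]
  refine sum_congr rfl fun i _ => ?_
  rw [taylor_coeff, ← factorial_smul_hasseDeriv, LinearMap.smul_apply, nsmul_eq_mul, eval_mul,
    eval_natCast, mul_div_cancel_left₀ _ (by exact_mod_cast i.factorial_ne_zero)]

theorem eval_sub_eval_sub_mul_derivative_eq_sum {K : Type*} [Field K] [CharZero K] (f : K[X])
    (x y : K) :
    f.eval y - f.eval x - (y - x) * f.derivative.eval x =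
      ∑ i ∈ Ico 2 (f.natDegree + 2), (derivative^[i] f).eval x / i.factorial * (y - x) ^ i := by
  rw [eval_eq_sum_range_iterate_derivative (by omega : f.natDegree < f.natDegree + 2) x y,
    range_eq_Ico, ← sum_Ico_consecutive _ (Nat.zero_le 2) (by omega : 2 ≤ f.natDegree + 2)]
  simp [sum_range_succ]
  ring

theorem abs_eval_sub_eval_sub_mul_derivative_le {P : ℝ[X]} {s C : ℝ} (hC : 0 < C)
    (h : ∀ k, 1 ≤ k →
      |(derivative^[k + 1] P).eval s| ≤ C * |(derivative^[k] P).eval s|) (u : ℝ) :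
    |P.eval u - P.eval s - (u - s) * P.derivative.eval s| ≤
      |u - s| * |P.derivative.eval s| *
        ((Real.exp (C * |u - s|) - 1) / (C * |u - s|) - 1) := by
  set a : ℕ → ℝ := fun k => (derivative^[k] P).eval s
  set y := C * |u - s|
  have hgeom : ∀ k, |a (k + 1)| ≤ C ^ k * |a 1| := by
    intro k
    induction k with
    | zero => simp
    | succ k ih =>
      calc |a (k + 2)| ≤ C * |a (k + 1)| := h (k + 1) (by omega)
        _ ≤ C * (C ^ k * |a 1|) := by gcongr
        _ = C ^ (k + 1) * |a 1| := by ring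
  have hterm : ∀ i ∈ Ico 2 (P.natDegree + 2),
      |a i / i.factorial * (u - s) ^ i| ≤ |a 1| / C * (y ^ i / i.factorial) := by
    intro i hi
    obtain ⟨k, rfl⟩ : ∃ k, i = k + 1 := ⟨i - 1, by grind⟩
    rw [abs_mul, abs_div, abs_pow, Nat.abs_cast]
    calc |a (k + 1)| / (k + 1).factorial * |u - s| ^ (k + 1)
        ≤ C ^ k * |a 1| / (k + 1).factorial * |u - s| ^ (k + 1) := by gcongr; exact hgeom k
      _ = |a 1| / C * (y ^ (k + 1) / (k + 1).factorial) := by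
        simp only [y]; field_simp; ring
  calc |P.eval u - P.eval s - (u - s) * P.derivative.eval s|
      ≤ ∑ i ∈ Ico 2 (P.natDegree + 2), |a 1| / C * (y ^ i / i.factorial) := by
        rw [eval_sub_eval_sub_mul_derivative_eq_sum]
        exact (abs_sum_le_sum_abs _ _).trans (sum_le_sum hterm)
    _ ≤ |a 1| / C * (Real.exp y - 1 - y) := by
        rw [← mul_sum]
        gcongr
        exact Real.sum_Ico_two_pow_div_factorial_le_exp_sub (by positivity) (by omega)
    _ = |u - s| * |P.derivative.eval s| * ((Real.exp y - 1) / y - 1) := by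
        rcases eq_or_ne u s with rfl | hus
        · simp [y]
        · have : 0 < |u - s| := abs_pos.2 (sub_ne_zero.2 hus)
          simp only [y, a, Function.iterate_one]
          field_simp

end Polynomial

theorem real_rooted_deriv_ratios (d : ℕ) (hd : 1 ≤ d) (t : Fin d → ℝ)
    (ht : StrictAnti t) (c : ℝ) (hc : 0 < c) (P : Polynomial ℝ)
    (hP : P = C c * ∏ i, (X - C (t i))) (s : ℝ) (hs : t ⟨0, hd⟩ < s) :
    (∀ k : ℕ, 1 ≤ k →
      (derivative^[k + 1] P).eval s / (derivative^[k] P).eval s ≤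
        (derivative^[2] P).eval s / (derivative^[1] P).eval s) ∧
    ∀ Cb : ℝ, 0 < Cb →
      (derivative^[2] P).eval s / (derivative^[1] P).eval s ≤ Cb →
      (∀ k : ℕ, 1 ≤ k →
        (derivative^[k + 1] P).eval s / (derivative^[k] P).eval s ≤ Cb) ∧
      ∀ u : ℝ,
        |P.eval u - P.eval s - (u - s) * P.derivative.eval s| ≤
          |u - s| * P.derivative.eval s *
            ((Real.exp (Cb * |u - s|) - 1) / (Cb * |u - s|) - 1) := by
  have hlt : ∀ i, t i < s := fun i => (ht.antitone (Fin.mk_le_mk.2 i.val.zero_le)).trans_lt hs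
  have hsplit : P.Splits := hP ▸ (Splits.prod fun i _ => Splits.X_sub_C (t i)).C_mul c
  have hroots : ∀ z ∈ P.roots, z < s := by
    rw [hP, roots_C_mul _ hc.ne', roots_prod _ _ (prod_ne_zero_iff.2 fun i _ => X_sub_C_ne_zero _)]
    simpa using hlt
  have hPs : 0 ≤ P.eval s := by
    simpa [hP, eval_prod] using (mul_pos hc (prod_pos fun i _ => sub_pos.2 (hlt i))).le
  have hnonneg := hsplit.eval_iterate_derivative_nonneg hroots hPs
  have hratio : ∀ k, 1 ≤ k → (derivative^[k + 1] P).eval s / (derivative^[k] P).eval s ≤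
      (derivative^[2] P).eval s / (derivative^[1] P).eval s :=
    fun k hk => hsplit.antitone_eval_iterate_derivative_div hroots hPs hk
  refine ⟨hratio, fun Cb hCb hle => ⟨fun k hk => (hratio k hk).trans hle, fun u => ?_⟩⟩
  have hgrowth : ∀ k, 1 ≤ k →
      |(derivative^[k + 1] P).eval s| ≤ Cb * |(derivative^[k] P).eval s| := by
    intro k hk
    rw [abs_of_nonneg (hnonneg _), abs_of_nonneg (hnonneg _)]
    rcases (hnonneg (k + 1)).eq_or_lt with h | h
    · rw [← h]
      exact mul_nonneg hCb.le (hnonneg k)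
    · exact (div_le_iff₀ (hsplit.eval_iterate_derivative_pos_of_succ hroots h)).1
        ((hratio k hk).trans hle)
  have hP' : 0 ≤ P.derivative.eval s := hnonneg 1
  simpa [abs_of_nonneg hP'] using abs_eval_sub_eval_sub_mul_derivative_le hCb hgrowth u
end

section
/- Let μ be a probability measure on [-1,1] with orthonormal polynomial basis {p̃_i} (with respect to a measure η(t)dμ, after weighting by a continuous nonnegative function η) satisfying the three-term recurrence p̃_{n+1}(t) = (ã_{n+1} t + b̃_{n+1}) p̃_n(t) − c̃_{n+1} p̃_{n−1}(t) with ã_{n+1} > 0. Fix s ∈ (−1,1) and coefficients λ_0,...,λ_{d−1}. Define g(t) = (t−s) η(t) (Σ_{i=0}^{d−1} (λ_i/(t−s)) det[[p̃_{i+1}(t), p̃_{i+1}(s)],[p̃_i(t), p̃_i(s)]])². Then the zeroth Fourier coefficient g_0 = ∫_{−1}^1 g dμ equals − Σ_{j=0}^{d−1} ã_{j+1} p̃_j(s) p̃_{j+1}(s) λ_j². -/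
/-!
Let `E_i` be the quotient of `p_{i+1}(t) p_i(s) - p_{i+1}(s) p_i(t)` by `t - s`, a polynomial of
degree at most `i`, so that `q = ∑ λ_i E_i`. The form `(u, v) ↦ ∫ (t - s) u v η dμ` is diagonal on
the `E_i`: for `k < i`, the pairing of `E_i` and `E_k` is the integral of `E_k` against
`p_i(s) p_{i+1} - p_{i+1}(s) p_i`, and both orthogonal polynomials have degree larger than `E_k`.
On the diagonal only `-p_{i+1}(s) ∫ E_i p_i η dμ` survives, and this integral is the coefficient of
`t^i` in `E_i`, namely `k_{i+1} p_i(s)`, divided by the leading coefficient `k_i` of `p_i`.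
-/

open MeasureTheory Polynomial

namespace Polynomial.Sequence

variable {K : Type*} [Field K] (S : Sequence K) (s : K)

noncomputable def det (i : ℕ) : K[X] :=
  S (i + 1) * C ((S i).eval s) - C ((S (i + 1)).eval s) * S i

noncomputable def detQuot (i : ℕ) : K[X] :=
  S.det s i /ₘ (X - C s)

theorem coeff_self_eq_leadingCoeff (i : ℕ) : (S i).coeff i = (S i).leadingCoeff := by
  rw [leadingCoeff, S.natDegree_eq]

theorem det_mul (i : ℕ) (r : K[X]) :
    S.det s i * r = (S i).eval s • (r * S (i + 1)) - (S (i + 1)).eval s • (r * S i) := by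
  simp only [det, smul_eq_C_mul]
  ring

theorem X_sub_C_mul_detQuot (i : ℕ) : (X - C s) * S.detQuot s i = S.det s i :=
  mul_divByMonic_eq_iff_isRoot.mpr <| by simp [det, mul_comm]

theorem natDegree_det_le (i : ℕ) : (S.det s i).natDegree ≤ i + 1 := by
  unfold det
  refine (natDegree_sub_le _ _).trans (max_le ?_ ?_)
  · exact (natDegree_mul_C_le _ _).trans (S.natDegree_eq (i + 1)).le
  · exact (natDegree_C_mul_le _ _).trans (by simp)

theorem natDegree_detQuot_le (i : ℕ) : (S.detQuot s i).natDegree ≤ i := by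
  rw [detQuot, natDegree_divByMonic _ (monic_X_sub_C s), natDegree_X_sub_C]
  have := S.natDegree_det_le s i
  omega

theorem coeff_detQuot_self (i : ℕ) :
    (S.detQuot s i).coeff i = (S (i + 1)).leadingCoeff * (S i).eval s := by
  have hcoeff := congrArg (coeff · (i + 1)) (S.X_sub_C_mul_detQuot s i)
  simp only [mul_comm (X - C s), coeff_mul_X_sub_C] at hcoeff
  rw [coeff_eq_zero_of_natDegree_lt ((S.natDegree_detQuot_le s i).trans_lt i.lt_succ_self),
    zero_mul, sub_zero] at hcoeff
  rw [hcoeff, det, coeff_sub, coeff_mul_C, coeff_C_mul,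
    coeff_eq_zero_of_natDegree_lt (p := S i) (by simp), mul_zero, sub_zero,
    coeff_self_eq_leadingCoeff]

variable {L : K[X] →ₗ[K] K} (hL : ∀ i j, i ≠ j → L (S i * S j) = 0)
include hL

theorem apply_mul_eq_zero_of_degree_lt {r : K[X]} {n : ℕ} (hr : r.degree < n) :
    L (r * S n) = 0 := by
  have hspan : r ∈ Submodule.span K (S '' Set.Iio n) := by
    rw [S.span_degreeLT fun i _ => (leadingCoeff_ne_zero.mpr (S.ne_zero i)).isUnit]
    exact mem_degreeLT.mpr hr
  suffices Submodule.span K (S '' Set.Iio n) ≤ LinearMap.ker (L ∘ₗ LinearMap.mulRight K (S n)) from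
    this hspan
  rw [Submodule.span_le]
  rintro _ ⟨k, hk, rfl⟩
  exact hL k n (ne_of_lt hk)

theorem apply_mul_eq_coeff_div_mul {r : K[X]} {n : ℕ} (hr : r.natDegree ≤ n) :
    L (r * S n) = r.coeff n / (S n).leadingCoeff * L (S n * S n) := by
  set c := r.coeff n / (S n).leadingCoeff
  have hlow : (r - C c * S n).degree < n := by
    rw [degree_lt_iff_coeff_zero]
    intro m hm
    rcases hm.eq_or_lt with rfl | hm
    · rw [coeff_sub, coeff_C_mul, coeff_self_eq_leadingCoeff,
        div_mul_cancel₀ _ (leadingCoeff_ne_zero.mpr (S.ne_zero n)), sub_self]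
    · rw [coeff_sub, coeff_C_mul, coeff_eq_zero_of_natDegree_lt (hr.trans_lt hm),
        coeff_eq_zero_of_natDegree_lt (by rwa [S.natDegree_eq]), mul_zero, sub_zero]
  have hsplit : r * S n = (r - C c * S n) * S n + c • (S n * S n) := by
    rw [← C_mul']
    ring
  rw [hsplit, map_add, S.apply_mul_eq_zero_of_degree_lt hL hlow, map_smul, smul_eq_mul, zero_add]

theorem apply_detQuot_mul_eq_zero_of_lt {k n : ℕ} (h : k < n) : L (S.detQuot s k * S n) = 0 :=
  S.apply_mul_eq_zero_of_degree_lt hL <|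
    (degree_le_of_natDegree_le (S.natDegree_detQuot_le s k)).trans_lt (by exact_mod_cast h)

theorem apply_det_mul_detQuot_of_lt {i k : ℕ} (h : k < i) : L (S.det s i * S.detQuot s k) = 0 := by
  rw [det_mul, map_sub, map_smul, map_smul, S.apply_detQuot_mul_eq_zero_of_lt s hL h,
    S.apply_detQuot_mul_eq_zero_of_lt s hL (h.trans i.lt_succ_self), smul_zero, smul_zero, sub_zero]

theorem apply_det_mul_detQuot_self (i : ℕ) :
    L (S.det s i * S.detQuot s i) = -((S (i + 1)).leadingCoeff / (S i).leadingCoeff *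
      (S i).eval s * (S (i + 1)).eval s * L (S i * S i)) := by
  rw [det_mul, map_sub, map_smul, map_smul, S.apply_detQuot_mul_eq_zero_of_lt s hL i.lt_succ_self,
    S.apply_mul_eq_coeff_div_mul hL (S.natDegree_detQuot_le s i), coeff_detQuot_self]
  simp only [smul_eq_mul]
  ring

theorem apply_X_sub_C_mul_detQuot_mul_detQuot (i k : ℕ) :
    L ((X - C s) * S.detQuot s i * S.detQuot s k) = if i = k then
      -((S (i + 1)).leadingCoeff / (S i).leadingCoeff *
        (S i).eval s * (S (i + 1)).eval s * L (S i * S i)) else 0 := by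
  rcases lt_trichotomy i k with h | rfl | h
  · rw [if_neg h.ne, mul_right_comm, X_sub_C_mul_detQuot, S.apply_det_mul_detQuot_of_lt s hL h]
  · rw [if_pos rfl, X_sub_C_mul_detQuot, S.apply_det_mul_detQuot_self s hL]
  · rw [if_neg h.ne', X_sub_C_mul_detQuot, S.apply_det_mul_detQuot_of_lt s hL h]

theorem apply_X_sub_C_mul_sq_sum_detQuot (d : ℕ) (lam : ℕ → K) :
    L ((X - C s) * (∑ i ∈ Finset.range d, C (lam i) * S.detQuot s i) ^ 2) =
      -∑ i ∈ Finset.range d, (S (i + 1)).leadingCoeff / (S i).leadingCoeff *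
        (S i).eval s * (S (i + 1)).eval s * lam i ^ 2 * L (S i * S i) := by
  have hexpand : (X - C s) * (∑ i ∈ Finset.range d, C (lam i) * S.detQuot s i) ^ 2 =
      ∑ i ∈ Finset.range d, ∑ k ∈ Finset.range d,
        (lam i * lam k) • ((X - C s) * S.detQuot s i * S.detQuot s k) := by
    rw [sq, Finset.sum_mul_sum, Finset.mul_sum]
    refine Finset.sum_congr rfl fun i _ => ?_
    rw [Finset.mul_sum]
    refine Finset.sum_congr rfl fun k _ => ?_
    rw [smul_eq_C_mul, C_mul]
    ring
  simp only [hexpand, map_sum, map_smul, S.apply_X_sub_C_mul_detQuot_mul_detQuot s hL,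
    smul_eq_mul, mul_ite, mul_zero, Finset.sum_ite_eq, Finset.mem_range, ← Finset.sum_neg_distrib]
  refine Finset.sum_congr rfl fun i hi => ?_
  rw [if_pos (Finset.mem_range.mp hi)]
  ring

end Polynomial.Sequence

theorem Continuous.integrable_of_ae_mem_isCompact {X E : Type*} [TopologicalSpace X]
    [T2Space X] [MeasurableSpace X] [OpensMeasurableSpace X] [NormedAddCommGroup E]
    {μ : Measure X} [IsFiniteMeasureOnCompacts μ] {K : Set X} {f : X → E}
    (hf : Continuous f) (hK : IsCompact K) (hμK : ∀ᵐ x ∂μ, x ∈ K) : Integrable f μ := by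
  rw [← Measure.restrict_eq_self_of_ae_mem hμK]
  exact hf.continuousOn.integrableOn_compact hK

@[simps]
noncomputable def weightedIntegral (μ : Measure ℝ) (η : ℝ → ℝ)
    (hint : ∀ p : ℝ[X], Integrable (fun t => p.eval t * η t) μ) : ℝ[X] →ₗ[ℝ] ℝ where
  toFun p := ∫ t, p.eval t * η t ∂μ
  map_add' p q := by
    simp only [eval_add, add_mul]
    exact integral_add (hint p) (hint q)
  map_smul' c p := by
    simp only [eval_smul, smul_eq_mul, mul_assoc, RingHom.id_apply]
    exact integral_const_mul c _

theorem zeroth_fourier_coefficient_general (μ : Measure ℝ) [IsProbabilityMeasure μ]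
    (hsupp : μ (Set.Icc (-1 : ℝ) 1)ᶜ = 0)
    (η : ℝ → ℝ) (hηc : Continuous η)
    (ptil : ℕ → Polynomial ℝ)
    (hdeg : ∀ i, (ptil i).natDegree = i)
    (horth : ∀ i j, ∫ t, (ptil i).eval t * (ptil j).eval t * η t ∂μ =
      if i = j then 1 else 0)
    (a : ℕ → ℝ)
    (hlead : ∀ i : ℕ, a (i + 1) = (ptil (i + 1)).leadingCoeff / (ptil i).leadingCoeff)
    (s : ℝ)
    (d : ℕ) (lam : ℕ → ℝ) (q : Polynomial ℝ)
    (hq : (X - C s) * q =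
      ∑ i ∈ Finset.range d, C (lam i) *
        (ptil (i + 1) * C ((ptil i).eval s) - C ((ptil (i + 1)).eval s) * ptil i)) :
    ∫ t, (t - s) * η t * (q.eval t) ^ 2 ∂μ =
      -∑ j ∈ Finset.range d,
        a (j + 1) * (ptil j).eval s * (ptil (j + 1)).eval s * lam j ^ 2 := by
  have hint (p : ℝ[X]) : Integrable (fun t => p.eval t * η t) μ :=
    (p.continuous.mul hηc).integrable_of_ae_mem_isCompact isCompact_Icc (mem_ae_iff.mpr hsupp)
  set L := weightedIntegral μ η hint
  have hL (i j : ℕ) : L (ptil i * ptil j) = if i = j then 1 else 0 := by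
    simpa only [L, weightedIntegral_apply, eval_mul] using horth i j
  have hne (i : ℕ) : ptil i ≠ 0 := fun h => by simpa [h] using hL i i
  let S : Sequence ℝ := ⟨ptil, fun i => by rw [degree_eq_natDegree (hne i), hdeg]⟩
  have hqS : q = ∑ i ∈ Finset.range d, C (lam i) * S.detQuot s i := by
    refine mul_left_cancel₀ (X_sub_C_ne_zero s) ?_
    rw [hq, Finset.mul_sum]
    refine Finset.sum_congr rfl fun i _ => ?_
    rw [mul_left_comm, S.X_sub_C_mul_detQuot]
    rfl
  calc ∫ t, (t - s) * η t * (q.eval t) ^ 2 ∂μ = L ((X - C s) * q ^ 2) := by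
        simp only [L, weightedIntegral_apply, eval_mul, eval_pow, eval_sub, eval_X, eval_C]
        congr 1 with t
        ring
    _ = _ := by
        rw [hqS, S.apply_X_sub_C_mul_sq_sum_detQuot s fun i j h => by simp [S, hL, h]]
        simp [S, hL, hlead]

theorem zeroth_fourier_coefficient (μ : Measure ℝ) [IsProbabilityMeasure μ]
    (hsupp : μ (Set.Icc (-1 : ℝ) 1)ᶜ = 0)
    (η : ℝ → ℝ) (hηc : Continuous η) (hη : ∀ t, 0 ≤ η t)
    (ptil : ℕ → Polynomial ℝ)
    (hdeg : ∀ i, (ptil i).natDegree = i)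
    (hone : ∀ i, 0 < (ptil i).eval 1)
    (horth : ∀ i j, ∫ t, (ptil i).eval t * (ptil j).eval t * η t ∂μ =
      if i = j then 1 else 0)
    (a b c : ℕ → ℝ) (ha : ∀ i, 0 < a (i + 1))
    (hlead : ∀ i : ℕ, a (i + 1) = (ptil (i + 1)).leadingCoeff / (ptil i).leadingCoeff)
    (hrec : ∀ i : ℕ, ptil (i + 2) =
      (C (a (i + 2)) * X + C (b (i + 2))) * ptil (i + 1) - C (c (i + 2)) * ptil i)
    (s : ℝ) (hs : s ∈ Set.Ioo (-1 : ℝ) 1)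
    (d : ℕ) (lam : ℕ → ℝ) (q : Polynomial ℝ)
    (hq : (X - C s) * q =
      ∑ i ∈ Finset.range d, C (lam i) *
        (ptil (i + 1) * C ((ptil i).eval s) - C ((ptil (i + 1)).eval s) * ptil i)) :
    ∫ t, (t - s) * η t * (q.eval t) ^ 2 ∂μ =
      -∑ j ∈ Finset.range d,
        a (j + 1) * (ptil j).eval s * (ptil (j + 1)).eval s * lam j ^ 2 :=
  zeroth_fourier_coefficient_general μ hsupp η hηc ptil hdeg horth a hlead s d lam q hq
end

section
/- Let {p_i} be orthonormal polynomials with respect to a probability measure μ on [-1,1], with p_i(1) > 0 for all i and satisfying the Christoffel–Darboux relation with ratios a_{l+1} = k_{l+1}/k_l of leading coefficients. For j < i define γ_{i,j} = ∫_{−1}^1 ((p_i(t) − p_i(1))/(t−1)) p_j(t) dμ(t). Then γ_{i,j} = p_i(1) p_j(1) Σ_{l=j}^{i−1} a_{l+1}/(p_l(1) p_{l+1}(1)) for j < i, and γ_{i,j} = 0 for j ≥ i. -/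
open MeasureTheory Polynomial

/-! With `Q_i = (p_i - p_i(1)) / (X - 1)` and `d_i = ∫ Q_i dμ`, the polynomial identity
`Q_i (p_j - p_j(1)) = (X - 1) Q_i Q_j = Q_j (p_i - p_i(1))` integrates to
`γ_{i,j} - p_j(1) d_i = γ_{j,i} - p_i(1) d_j`, and `γ_{j,i} = 0` for `j ≤ i` since `deg Q_j < j`.
So `γ_{i,j} = p_j(1) d_i - p_i(1) d_j` for `j < i`. For `(i, j) = (l + 1, l)` the left side only
sees the leading coefficient of `Q_{l+1}`, which gives
`d_{l+1} / p_{l+1}(1) - d_l / p_l(1) = a_{l+1} / (p_l(1) p_{l+1}(1))`; telescoping finishes.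
This replaces the Christoffel–Darboux formula by a single polynomial identity. -/

noncomputable def diffQuot {K : Type*} [Field K] (f : K[X]) (x : K) : K[X] :=
  (f - C (f.eval x)) /ₘ (X - C x)

section DiffQuot

variable {K : Type*} [Field K] (f g : K[X]) (x : K)

theorem X_sub_C_mul_diffQuot : (X - C x) * diffQuot f x = f - C (f.eval x) :=
  mul_divByMonic_eq_iff_isRoot.mpr (by simp)

theorem eq_diffQuot_of_X_sub_C_mul_eq {q : K[X]} (hq : (X - C x) * q = f - C (f.eval x)) :
    q = diffQuot f x :=
  mul_left_cancel₀ (X_sub_C_ne_zero x) (hq.trans (X_sub_C_mul_diffQuot f x).symm)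

theorem natDegree_diffQuot : (diffQuot f x).natDegree = f.natDegree - 1 := by
  rw [diffQuot, natDegree_divByMonic _ (monic_X_sub_C x), natDegree_sub_C, natDegree_X_sub_C]

theorem degree_diffQuot_lt : (diffQuot f x).degree < f.natDegree := by
  by_cases hf : f.natDegree = 0
  · rw [eq_C_of_natDegree_eq_zero hf]
    simp [diffQuot]
  · exact (degree_le_natDegree).trans_lt (by rw [natDegree_diffQuot]; exact_mod_cast (by omega))

theorem leadingCoeff_diffQuot (hf : f.natDegree ≠ 0) :
    (diffQuot f x).leadingCoeff = f.leadingCoeff := by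
  have hf : 0 < f.degree := natDegree_pos_iff_degree_pos.mp (Nat.pos_of_ne_zero hf)
  rw [diffQuot, leadingCoeff_divByMonic_X_sub_C _ (by rw [degree_sub_C hf]; exact hf.ne'),
    leadingCoeff_sub_of_degree_lt ((degree_C_le).trans_lt hf)]

theorem diffQuot_mul_sub_C_eval :
    diffQuot f x * (g - C (g.eval x)) = diffQuot g x * (f - C (f.eval x)) := by
  rw [← X_sub_C_mul_diffQuot g, ← X_sub_C_mul_diffQuot f]
  ring

end DiffQuot

theorem degree_sub_C_mul_lt {K : Type*} [Field K] {f g : K[X]} {n : ℕ} (hg : g.natDegree = n)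
    (hg0 : g ≠ 0) (hf : f.degree ≤ n) :
    (f - C (f.coeff n / g.leadingCoeff) * g).degree < n := by
  rw [degree_lt_iff_coeff_zero]
  intro k hk
  rcases (show n ≤ k by exact_mod_cast hk).eq_or_lt with rfl | hk
  · rw [coeff_sub, coeff_C_mul, ← hg, coeff_natDegree]
    field_simp [leadingCoeff_ne_zero.mpr hg0]
    ring
  · have hfk : f.coeff k = 0 := coeff_eq_zero_of_degree_lt (hf.trans_lt (by exact_mod_cast hk))
    have hgk : g.coeff k = 0 := coeff_eq_zero_of_natDegree_lt (by omega)
    rw [coeff_sub, coeff_C_mul, hfk, hgk, mul_zero, sub_zero]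

theorem apply_diffQuot_mul_sub_comm {K : Type*} [Field K] (L : K[X] →ₗ[K] K) (f g : K[X]) (x : K) :
    L (diffQuot f x * g) - g.eval x * L (diffQuot f x) =
      L (diffQuot g x * f) - f.eval x * L (diffQuot g x) := by
  have := congrArg L (diffQuot_mul_sub_C_eval f g x)
  simpa only [mul_sub, mul_comm _ (C _), ← smul_eq_C_mul, map_sub, map_smul, smul_eq_mul] using this

section Orthonormal

variable {K : Type*} [Field K] {L : K[X] →ₗ[K] K} {p : ℕ → K[X]}
  (hdeg : ∀ i, (p i).natDegree = i) (horth : ∀ i j, L (p i * p j) = if i = j then 1 else 0)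
include horth

theorem ne_zero_of_orthonormal (i : ℕ) : p i ≠ 0 := by
  intro h
  simpa [h] using horth i i

include hdeg

theorem apply_mul_eq_zero_of_degree_lt {f : K[X]} {m : ℕ} (hf : f.degree < m) :
    L (f * p m) = 0 := by
  suffices h : ∀ n : ℕ, ∀ f : K[X], f.degree < n → ∀ m, n ≤ m → L (f * p m) = 0 from
    h m f hf m le_rfl
  intro n
  induction n with
  | zero =>
    intro f hf m _
    obtain rfl : f = 0 := by simpa using hf
    rw [zero_mul, map_zero]
  | succ n ih =>
    intro f hf m hm
    set c := f.coeff n / (p n).leadingCoeff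
    have hsplit : f * p m = (f - C c * p n) * p m + c • (p n * p m) := by
      rw [smul_eq_C_mul]; ring
    have hrem := degree_sub_C_mul_lt (hdeg n) (ne_zero_of_orthonormal horth n)
      (Order.le_of_lt_succ hf)
    rw [hsplit, map_add, map_smul, ih _ hrem m (by omega), horth, if_neg (by omega), smul_zero,
      add_zero]

theorem apply_mul_self_of_degree_le {f : K[X]} {n : ℕ} (hf : f.degree ≤ n) :
    L (f * p n) = f.coeff n / (p n).leadingCoeff := by
  set c := f.coeff n / (p n).leadingCoeff
  have hsplit : f * p n = (f - C c * p n) * p n + c • (p n * p n) := by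
    rw [smul_eq_C_mul]; ring
  rw [hsplit, map_add, map_smul, apply_mul_eq_zero_of_degree_lt hdeg horth
    (degree_sub_C_mul_lt (hdeg n) (ne_zero_of_orthonormal horth n) hf), horth, if_pos rfl,
    smul_eq_mul, mul_one, zero_add]

variable (x : K)

theorem apply_diffQuot_mul_eq_zero {i j : ℕ} (hij : i ≤ j) : L (diffQuot (p i) x * p j) = 0 := by
  refine apply_mul_eq_zero_of_degree_lt hdeg horth ((degree_diffQuot_lt (p i) x).trans_le ?_)
  rw [hdeg]
  exact_mod_cast hij

theorem apply_diffQuot_succ_mul_self (l : ℕ) :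
    L (diffQuot (p (l + 1)) x * p l) = (p (l + 1)).leadingCoeff / (p l).leadingCoeff := by
  have hnat : (diffQuot (p (l + 1)) x).natDegree = l := by simp [natDegree_diffQuot, hdeg]
  have hcoeff : (diffQuot (p (l + 1)) x).coeff l = (p (l + 1)).leadingCoeff := by
    rw [← leadingCoeff_diffQuot _ x (by rw [hdeg]; omega), leadingCoeff, hnat]
  rw [apply_mul_self_of_degree_le hdeg horth (degree_le_of_natDegree_le hnat.le), hcoeff]

theorem apply_diffQuot_mul_of_lt {i j : ℕ} (hji : j < i) :
    L (diffQuot (p i) x * p j) =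
      (p j).eval x * L (diffQuot (p i) x) - (p i).eval x * L (diffQuot (p j) x) := by
  have h := apply_diffQuot_mul_sub_comm L (p i) (p j) x
  rw [apply_diffQuot_mul_eq_zero hdeg horth x hji.le] at h
  linear_combination h

variable {x} (hx : ∀ l, (p l).eval x ≠ 0)
include hx

theorem apply_diffQuot_div_eval_succ_sub (l : ℕ) :
    L (diffQuot (p (l + 1)) x) / (p (l + 1)).eval x - L (diffQuot (p l) x) / (p l).eval x =
      (p (l + 1)).leadingCoeff / (p l).leadingCoeff / ((p l).eval x * (p (l + 1)).eval x) := by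
  have h := apply_diffQuot_mul_of_lt hdeg horth x (Nat.lt_succ_self l)
  rw [apply_diffQuot_succ_mul_self hdeg horth] at h
  rw [h]
  field_simp [hx l, hx (l + 1)]

theorem apply_diffQuot_mul_eq_sum {i j : ℕ} (hji : j < i) :
    L (diffQuot (p i) x * p j) = (p i).eval x * (p j).eval x *
      ∑ l ∈ Finset.Ico j i,
        (p (l + 1)).leadingCoeff / (p l).leadingCoeff / ((p l).eval x * (p (l + 1)).eval x) := by
  rw [apply_diffQuot_mul_of_lt hdeg horth x hji, ← Finset.sum_congr rfl
    (fun l _ => apply_diffQuot_div_eval_succ_sub hdeg horth hx l),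
    Finset.sum_Ico_sub (fun l => L (diffQuot (p l) x) / (p l).eval x) hji.le]
  field_simp [hx i, hx j]

end Orthonormal

theorem integrable_eval_of_measure_compl_eq_zero {μ : Measure ℝ} [IsFiniteMeasureOnCompacts μ]
    {s : Set ℝ} (hs : IsCompact s) (hμ : μ sᶜ = 0) (f : ℝ[X]) :
    Integrable (fun t => f.eval t) μ := by
  rw [← Measure.restrict_eq_self_of_ae_mem (ae_iff.mpr hμ)]
  exact f.continuous.continuousOn.integrableOn_compact hs

noncomputable def momentFunctional (μ : Measure ℝ)
    (hμ : ∀ f : ℝ[X], Integrable (fun t => f.eval t) μ) : ℝ[X] →ₗ[ℝ] ℝ where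
  toFun f := ∫ t, f.eval t ∂μ
  map_add' f g := by simp only [eval_add]; exact integral_add (hμ f) (hμ g)
  map_smul' c f := by simp only [eval_smul, smul_eq_mul, integral_const_mul, RingHom.id_apply]

theorem gamma_formula (μ : Measure ℝ) [IsProbabilityMeasure μ]
    (hsupp : μ (Set.Icc (-1 : ℝ) 1)ᶜ = 0)
    (p : ℕ → Polynomial ℝ)
    (hdeg : ∀ i, (p i).natDegree = i)
    (hone : ∀ i, 0 < (p i).eval 1)
    (horth : ∀ i j, ∫ t, (p i).eval t * (p j).eval t ∂μ = if i = j then 1 else 0)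
    (a : ℕ → ℝ)
    (ha : ∀ l : ℕ, a (l + 1) = (p (l + 1)).leadingCoeff / (p l).leadingCoeff)
    (i j : ℕ) (q : Polynomial ℝ)
    (hq : (X - C 1) * q = p i - C ((p i).eval 1)) :
    (j < i →
      ∫ t, q.eval t * (p j).eval t ∂μ =
        (p i).eval 1 * (p j).eval 1 *
          ∑ l ∈ Finset.Ico j i, a (l + 1) / ((p l).eval 1 * (p (l + 1)).eval 1)) ∧
    (i ≤ j → ∫ t, q.eval t * (p j).eval t ∂μ = 0) := by
  set L := momentFunctional μ (integrable_eval_of_measure_compl_eq_zero isCompact_Icc hsupp)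
  have hL : ∀ f g : ℝ[X], ∫ t, f.eval t * g.eval t ∂μ = L (f * g) := fun f g => by
    simp [L, momentFunctional, eval_mul]
  have horth' : ∀ i j, L (p i * p j) = if i = j then 1 else 0 := fun i j => hL _ _ ▸ horth i j
  rw [hL, eq_diffQuot_of_X_sub_C_mul_eq _ _ hq]
  refine ⟨fun hji => ?_, apply_diffQuot_mul_eq_zero hdeg horth' 1⟩
  rw [apply_diffQuot_mul_eq_sum hdeg horth' (fun l => (hone l).ne') hji]
  simp only [ha]
end

section
/- Let μ be a probability measure on [-1,1], {p_i} its orthonormal polynomial basis with p_i(1) > 0, and fix s ∈ (−1,1) and d ≥ 1. Suppose f is a polynomial of degree d−1 satisfying ∫_{−1}^1 f(t) q(t) (t−1)(t−s) dμ(t) = 0 for every polynomial q of degree at most d−2. Then f is uniquely determined up to a scalar multiple; in particular, any two nonzero polynomials of degree d−1 satisfying this orthogonality condition are proportional. -/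
open MeasureTheory Polynomial

/-- Any polynomial is integrable w.r.t. a finite measure supported on `[-1,1]`. -/
lemma integrable_eval_aux (μ : Measure ℝ) [IsFiniteMeasure μ]
    (hsupp : μ (Set.Icc (-1 : ℝ) 1)ᶜ = 0) (P : Polynomial ℝ) :
    Integrable (fun t => P.eval t) μ := by
  obtain ⟨C, hC⟩ := (isCompact_Icc : IsCompact (Set.Icc (-1 : ℝ) 1)).exists_bound_of_continuousOn
    (P.continuous_aeval.continuousOn)
  have hae : ∀ᵐ t ∂μ, t ∈ Set.Icc (-1 : ℝ) 1 := mem_ae_iff.mpr hsupp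
  refine Integrable.mono' (integrable_const C) P.continuous_aeval.aestronglyMeasurable ?_
  filter_upwards [hae] with t ht using by simpa using hC t ht

/-- Low-degree polynomials are orthogonal to `p n`. -/
lemma orth_low_aux (μ : Measure ℝ) [IsFiniteMeasure μ]
    (hsupp : μ (Set.Icc (-1 : ℝ) 1)ᶜ = 0)
    (p : ℕ → Polynomial ℝ)
    (hdeg : ∀ i, (p i).natDegree = i)
    (hone : ∀ i, 0 < (p i).eval 1)
    (horth : ∀ i j, ∫ t, (p i).eval t * (p j).eval t ∂μ = if i = j then 1 else 0) :
    ∀ (m : ℕ) (q : Polynomial ℝ), q.natDegree < m → ∀ n : ℕ,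
      q.degree < (n : WithBot ℕ) → ∫ t, q.eval t * (p n).eval t ∂μ = 0 := by
  have hpne : ∀ i, p i ≠ 0 := fun i h => by simpa [h] using (hone i)
  intro m
  induction m with
  | zero => intro q hq; omega
  | succ m ih =>
    intro q hq n hqn
    by_cases hq0 : q = 0
    · simp [hq0]
    have hk : q.natDegree < n := by
      have := (Polynomial.degree_eq_natDegree hq0) ▸ hqn
      exact_mod_cast this
    set k := q.natDegree with hkdef
    set c : ℝ := q.leadingCoeff / (p k).leadingCoeff with hc
    have hcne : c ≠ 0 := by
      simp only [hc, div_ne_zero_iff]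
      exact ⟨Polynomial.leadingCoeff_ne_zero.mpr hq0, Polynomial.leadingCoeff_ne_zero.mpr (hpne k)⟩
    set q' : Polynomial ℝ := q - Polynomial.C c * p k with hq'
    have hlc : q.leadingCoeff = (Polynomial.C c * p k).leadingCoeff := by
      rw [Polynomial.leadingCoeff_mul, Polynomial.leadingCoeff_C, hc,
        div_mul_cancel₀ _ (Polynomial.leadingCoeff_ne_zero.mpr (hpne k))]
    have hdegeq : q.degree = (Polynomial.C c * p k).degree := by
      rw [Polynomial.degree_C_mul hcne, Polynomial.degree_eq_natDegree hq0,
        Polynomial.degree_eq_natDegree (hpne k), hdeg k]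
    have hq'lt : q'.degree < q.degree := Polynomial.degree_sub_lt hdegeq hq0 hlc
    have h1 : ∫ t, q'.eval t * (p n).eval t ∂μ = 0 := by
      by_cases hq'0 : q' = 0
      · simp [hq'0]
      · refine ih q' ?_ n ?_
        · have := (Polynomial.degree_eq_natDegree hq'0) ▸ hq'lt
          rw [Polynomial.degree_eq_natDegree hq0] at this
          have : q'.natDegree < q.natDegree := by exact_mod_cast this
          omega
        · exact lt_trans hq'lt hqn
    have h2 : ∫ t, (p k).eval t * (p n).eval t ∂μ = 0 := by
      rw [horth k n, if_neg (by omega)]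
    have hint1 : Integrable (fun t => q'.eval t * (p n).eval t) μ := by
      have := integrable_eval_aux μ hsupp (q' * p n)
      simpa [Polynomial.eval_mul] using this
    have hint2 : Integrable (fun t => (p k).eval t * (p n).eval t) μ := by
      have := integrable_eval_aux μ hsupp (p k * p n)
      simpa [Polynomial.eval_mul] using this
    have hsplit : (fun t => q.eval t * (p n).eval t)
        = fun t => q'.eval t * (p n).eval t + c * ((p k).eval t * (p n).eval t) := by
      funext t
      have hqt : q.eval t = q'.eval t + c * (p k).eval t := by
        simp only [hq', Polynomial.eval_sub, Polynomial.eval_mul, Polynomial.eval_C]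
        ring
      rw [hqt]; ring
    rw [hsplit, integral_add hint1 (hint2.const_mul c), h1, integral_const_mul, h2]
    ring

/-- A polynomial vanishing a.e. is zero. -/
lemma poly_ae_zero_aux (μ : Measure ℝ) [IsFiniteMeasure μ]
    (hsupp : μ (Set.Icc (-1 : ℝ) 1)ᶜ = 0)
    (p : ℕ → Polynomial ℝ)
    (hdeg : ∀ i, (p i).natDegree = i)
    (hone : ∀ i, 0 < (p i).eval 1)
    (horth : ∀ i j, ∫ t, (p i).eval t * (p j).eval t ∂μ = if i = j then 1 else 0)
    (r : Polynomial ℝ) (hr : ∀ᵐ t ∂μ, r.eval t = 0) : r = 0 := by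
  have hpne : ∀ i, p i ≠ 0 := fun i h => by simpa [h] using (hone i)
  by_contra hr0
  set n := r.natDegree with hn
  set c : ℝ := r.leadingCoeff / (p n).leadingCoeff with hc
  have hcne : c ≠ 0 := by
    simp only [hc, div_ne_zero_iff]
    exact ⟨Polynomial.leadingCoeff_ne_zero.mpr hr0, Polynomial.leadingCoeff_ne_zero.mpr (hpne n)⟩
  set r' : Polynomial ℝ := r - Polynomial.C c * p n with hr'
  have hlc : r.leadingCoeff = (Polynomial.C c * p n).leadingCoeff := by
    rw [Polynomial.leadingCoeff_mul, Polynomial.leadingCoeff_C, hc,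
      div_mul_cancel₀ _ (Polynomial.leadingCoeff_ne_zero.mpr (hpne n))]
  have hdegeq : r.degree = (Polynomial.C c * p n).degree := by
    rw [Polynomial.degree_C_mul hcne, Polynomial.degree_eq_natDegree hr0,
      Polynomial.degree_eq_natDegree (hpne n), hdeg n]
  have hr'lt : r'.degree < r.degree := Polynomial.degree_sub_lt hdegeq hr0 hlc
  have h1 : ∫ t, r'.eval t * (p n).eval t ∂μ = 0 := by
    by_cases hr'0 : r' = 0
    · simp [hr'0]
    · refine orth_low_aux μ hsupp p hdeg hone horth (r'.natDegree + 1) r' (by omega) n ?_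
      calc r'.degree < r.degree := hr'lt
        _ = (n : WithBot ℕ) := Polynomial.degree_eq_natDegree hr0
  have h2 : ∫ t, (p n).eval t * (p n).eval t ∂μ = 1 := by rw [horth n n, if_pos rfl]
  have hint1 : Integrable (fun t => r'.eval t * (p n).eval t) μ := by
    have := integrable_eval_aux μ hsupp (r' * p n)
    simpa [Polynomial.eval_mul] using this
  have hint2 : Integrable (fun t => (p n).eval t * (p n).eval t) μ := by
    have := integrable_eval_aux μ hsupp (p n * p n)
    simpa [Polynomial.eval_mul] using this
  have hzero : ∫ t, r.eval t * (p n).eval t ∂μ = 0 := by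
    have heq : (fun t => r.eval t * (p n).eval t) =ᵐ[μ] 0 := by
      filter_upwards [hr] with t ht using by simp [ht]
    rw [integral_congr_ae heq]
    simp
  have hsplit : (fun t => r.eval t * (p n).eval t)
      = fun t => r'.eval t * (p n).eval t + c * ((p n).eval t * (p n).eval t) := by
    funext t
    have hrt : r.eval t = r'.eval t + c * (p n).eval t := by
      simp only [hr', Polynomial.eval_sub, Polynomial.eval_mul, Polynomial.eval_C]
      ring
    rw [hrt]; ring
  rw [hsplit, integral_add hint1 (hint2.const_mul c), h1, integral_const_mul, h2] at hzero
  simp at hzero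
  exact hcne hzero

theorem extremal_polynomial_unique (μ : Measure ℝ) [IsProbabilityMeasure μ]
    (hsupp : μ (Set.Icc (-1 : ℝ) 1)ᶜ = 0)
    (p : ℕ → Polynomial ℝ)
    (hdeg : ∀ i, (p i).natDegree = i)
    (hone : ∀ i, 0 < (p i).eval 1)
    (horth : ∀ i j, ∫ t, (p i).eval t * (p j).eval t ∂μ = if i = j then 1 else 0)
    (s : ℝ) (hs : s ∈ Set.Ioo (-1 : ℝ) 1) (d : ℕ) (hd : 1 ≤ d)
    (f g : Polynomial ℝ) (hf0 : f ≠ 0) (hg0 : g ≠ 0)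
    (hfdeg : f.natDegree = d - 1) (hgdeg : g.natDegree = d - 1)
    (hforth : ∀ q : Polynomial ℝ, q.degree < ((d - 1 : ℕ) : WithBot ℕ) →
      ∫ t, f.eval t * q.eval t * (t - 1) * (t - s) ∂μ = 0)
    (hgorth : ∀ q : Polynomial ℝ, q.degree < ((d - 1 : ℕ) : WithBot ℕ) →
      ∫ t, g.eval t * q.eval t * (t - 1) * (t - s) ∂μ = 0) :
    ∃ cst : ℝ, g = cst • f := by
  set α : ℝ := g.leadingCoeff / f.leadingCoeff with hα
  refine ⟨α, ?_⟩
  by_cases hfg : g = α • f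
  · exact hfg
  set h : Polynomial ℝ := Polynomial.C α * f - g with hh
  have hCαf : Polynomial.C α * f = α • f := by
    rw [Polynomial.smul_eq_C_mul]
  have hh0 : h ≠ 0 := fun hz => hfg (by
    rw [hh, hCαf, sub_eq_zero] at hz; exact hz.symm)
  have hαne : α ≠ 0 := by
    simp only [hα, div_ne_zero_iff]
    exact ⟨Polynomial.leadingCoeff_ne_zero.mpr hg0, Polynomial.leadingCoeff_ne_zero.mpr hf0⟩
  have hdegeq : (Polynomial.C α * f).degree = g.degree := by
    rw [Polynomial.degree_C_mul hαne, Polynomial.degree_eq_natDegree hf0,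
      Polynomial.degree_eq_natDegree hg0, hfdeg, hgdeg]
  have hαf0 : Polynomial.C α * f ≠ 0 :=
    mul_ne_zero (by simpa using hαne) hf0
  have hlc : (Polynomial.C α * f).leadingCoeff = g.leadingCoeff := by
    rw [Polynomial.leadingCoeff_mul, Polynomial.leadingCoeff_C, hα,
      div_mul_cancel₀ _ (Polynomial.leadingCoeff_ne_zero.mpr hf0)]
  have hhdeg : h.degree < ((d - 1 : ℕ) : WithBot ℕ) := by
    have hlt := Polynomial.degree_sub_lt hdegeq.symm hg0 hlc.symm
    have hdegg : g.degree = ((d - 1 : ℕ) : WithBot ℕ) := by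
      rw [Polynomial.degree_eq_natDegree hg0, hgdeg]
    calc h.degree = (g - Polynomial.C α * f).degree := by rw [hh, ← neg_sub, Polynomial.degree_neg]
      _ < g.degree := hlt
      _ = ((d - 1 : ℕ) : WithBot ℕ) := hdegg
  have hint : ∀ P : Polynomial ℝ, Integrable (fun t => P.eval t) μ :=
    integrable_eval_aux μ hsupp
  have hhorth : ∀ q : Polynomial ℝ, q.degree < ((d - 1 : ℕ) : WithBot ℕ) →
      ∫ t, h.eval t * q.eval t * (t - 1) * (t - s) ∂μ = 0 := by
    intro q hq
    have hintf : Integrable (fun t => f.eval t * q.eval t * (t - 1) * (t - s)) μ := by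
      have := hint (f * q * (X - 1) * (X - Polynomial.C s))
      simpa [Polynomial.eval_mul] using this
    have hintg : Integrable (fun t => g.eval t * q.eval t * (t - 1) * (t - s)) μ := by
      have := hint (g * q * (X - 1) * (X - Polynomial.C s))
      simpa [Polynomial.eval_mul] using this
    have hsplit : (fun t => h.eval t * q.eval t * (t - 1) * (t - s))
        = fun t => α * (f.eval t * q.eval t * (t - 1) * (t - s))
            - g.eval t * q.eval t * (t - 1) * (t - s) := by
      funext t
      have hht : h.eval t = α * f.eval t - g.eval t := by
        simp [hh]
      rw [hht]; ring
    rw [hsplit, integral_sub (hintf.const_mul α) hintg, integral_const_mul,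
      hforth q hq, hgorth q hq]
    ring
  -- key: ∫ h² (t-1)(t-s)² = 0
  set q1 : Polynomial ℝ := h * (X - Polynomial.C s) with hq1
  have hq1deg : q1.natDegree ≤ d - 1 := by
    have h1 : h.natDegree < d - 1 ∨ (h.natDegree = 0 ∧ 0 < d - 1) := by
      have hdd := (Polynomial.degree_eq_natDegree hh0) ▸ hhdeg
      have hlt : h.natDegree < d - 1 := by exact_mod_cast hdd
      left; exact hlt
    have h2 : (X - Polynomial.C s : Polynomial ℝ).natDegree = 1 := Polynomial.natDegree_X_sub_C s
    calc q1.natDegree ≤ h.natDegree + (X - Polynomial.C s : Polynomial ℝ).natDegree :=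
        Polynomial.natDegree_mul_le
      _ = h.natDegree + 1 := by rw [h2]
      _ ≤ d - 1 := by rcases h1 with h1 | h1 <;> omega
  set β : ℝ := q1.coeff (d - 1) / f.leadingCoeff with hβ
  set r : Polynomial ℝ := q1 - Polynomial.C β * f with hrdef
  have hrdeg : r.degree < ((d - 1 : ℕ) : WithBot ℕ) := by
    rw [Polynomial.degree_lt_iff_coeff_zero]
    intro m hm
    have hmnat : d - 1 ≤ m := by exact_mod_cast hm
    rcases eq_or_lt_of_le hmnat with hm' | hm'
    · rw [hrdef]
      simp only [Polynomial.coeff_sub, Polynomial.coeff_C_mul]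
      rw [← hm']
      have hfc : f.coeff (d - 1) = f.leadingCoeff := by
        rw [Polynomial.leadingCoeff, hfdeg]
      rw [hfc, hβ, div_mul_cancel₀ _ (Polynomial.leadingCoeff_ne_zero.mpr hf0)]
      ring
    · rw [hrdef]
      simp only [Polynomial.coeff_sub, Polynomial.coeff_C_mul]
      rw [Polynomial.coeff_eq_zero_of_natDegree_lt (lt_of_le_of_lt hq1deg hm'),
        Polynomial.coeff_eq_zero_of_natDegree_lt (by omega : f.natDegree < m)]
      ring
  have hkey : ∫ t, h.eval t * q1.eval t * (t - 1) * (t - s) ∂μ = 0 := by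
    have hintf2 : Integrable (fun t => h.eval t * f.eval t * (t - 1) * (t - s)) μ := by
      have := hint (h * f * (X - 1) * (X - Polynomial.C s))
      simpa [Polynomial.eval_mul] using this
    have hintr : Integrable (fun t => h.eval t * r.eval t * (t - 1) * (t - s)) μ := by
      have := hint (h * r * (X - 1) * (X - Polynomial.C s))
      simpa [Polynomial.eval_mul] using this
    have hfh : ∫ t, h.eval t * f.eval t * (t - 1) * (t - s) ∂μ = 0 := by
      have hfo := hforth h hhdeg
      rw [← hfo]
      congr 1; funext t; ring
    have hhr : ∫ t, h.eval t * r.eval t * (t - 1) * (t - s) ∂μ = 0 := hhorth r hrdeg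
    have hsplit : (fun t => h.eval t * q1.eval t * (t - 1) * (t - s))
        = fun t => β * (h.eval t * f.eval t * (t - 1) * (t - s))
            + h.eval t * r.eval t * (t - 1) * (t - s) := by
      funext t
      have hq1t : q1.eval t = β * f.eval t + r.eval t := by
        simp only [hrdef, Polynomial.eval_sub, Polynomial.eval_mul, Polynomial.eval_C]
        ring
      rw [hq1t]; ring
    rw [hsplit, integral_add (hintf2.const_mul β) hintr, integral_const_mul, hfh, hhr]
    ring
  set F : ℝ → ℝ := fun t => (h.eval t) ^ 2 * (1 - t) * (t - s) ^ 2 with hF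
  have hFeq : ∀ t, F t = -(h.eval t * q1.eval t * (t - 1) * (t - s)) := by
    intro t
    simp only [hF, hq1, Polynomial.eval_mul, Polynomial.eval_sub, Polynomial.eval_X,
      Polynomial.eval_C]
    ring
  have hFint : Integrable F μ := by
    have := hint (-(h * q1 * (X - 1) * (X - Polynomial.C s)))
    refine this.congr (Filter.Eventually.of_forall fun t => ?_)
    simp only [Polynomial.eval_neg, Polynomial.eval_mul, Polynomial.eval_sub, Polynomial.eval_X,
      Polynomial.eval_one, Polynomial.eval_C]
    rw [hFeq t]
  have hFzero : ∫ t, F t ∂μ = 0 := by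
    have heq : (fun t => F t) = fun t => -(h.eval t * q1.eval t * (t - 1) * (t - s)) := by
      funext t; exact hFeq t
    rw [heq, integral_neg, hkey, neg_zero]
  have hae : ∀ᵐ t ∂μ, t ∈ Set.Icc (-1 : ℝ) 1 := mem_ae_iff.mpr hsupp
  have hFnonneg : 0 ≤ᵐ[μ] F := by
    filter_upwards [hae] with t ht
    have h1 : (0:ℝ) ≤ 1 - t := by linarith [ht.2]
    have : (0:ℝ) ≤ (h.eval t) ^ 2 * (1 - t) * (t - s) ^ 2 :=
      mul_nonneg (mul_nonneg (sq_nonneg _) h1) (sq_nonneg _)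
    simpa [hF] using this
  have hFae : F =ᵐ[μ] 0 := (integral_eq_zero_iff_of_nonneg_ae hFnonneg hFint).mp hFzero
  set P : Polynomial ℝ := h * (X - 1) * (X - Polynomial.C s) with hP
  have hPae : ∀ᵐ t ∂μ, P.eval t = 0 := by
    filter_upwards [hFae] with t ht
    have hsq : (P.eval t) ^ 2 = F t * (1 - t) := by
      simp only [hP, hF, Polynomial.eval_mul, Polynomial.eval_sub, Polynomial.eval_X,
        Polynomial.eval_one, Polynomial.eval_C]
      ring
    have hzero : (P.eval t) ^ 2 = 0 := by
      rw [hsq, Pi.zero_apply] at *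
      rw [ht]; ring
    exact pow_eq_zero_iff (n := 2) (by norm_num) |>.mp hzero
  have hP0 : P = 0 := poly_ae_zero_aux μ hsupp p hdeg hone horth P hPae
  have hX1 : (X - 1 : Polynomial ℝ) ≠ 0 := by
    have := Polynomial.X_sub_C_ne_zero (1 : ℝ)
    simpa using this
  have hXs : (X - Polynomial.C s : Polynomial ℝ) ≠ 0 := Polynomial.X_sub_C_ne_zero s
  have hhz : h = 0 := by
    rcases mul_eq_zero.mp hP0 with h1 | h1
    · rcases mul_eq_zero.mp h1 with h2 | h2
      · exact h2
      · exact absurd h2 hX1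
    · exact absurd h1 hXs
  exact absurd hhz hh0
end

section
/- Let Q be a real quadratic form on ℝ^d of signature (1, d−1) (one positive and d−1 negative eigenvalues). Then the set C = {λ ∈ ℝ^d : Q(λ) ≥ 1} has the property that each of its connected components is convex. Moreover, if L is a linear functional and λ^c ∈ ℝ^d satisfies Q(λ^c) > 0, L(λ^c) > 0, and ∇(L²)(λ^c) is parallel to ∇Q(λ^c), then λ^c is a global minimum of λ ↦ L(λ)²/Q(λ) on the component of {Q > 0} containing λ^c. -/
/-!
In coordinates `u = e x` the form is the Minkowski form `B u v = u₀ v₀ - ∑_{i ≠ 0} uᵢ vᵢ`, and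
everything rests on the reverse Cauchy–Schwarz inequality `B u u * B v v ≤ B u v ^ 2` for
timelike `u`. On one sheet of the hyperboloid `B u u ≥ 1` it gives `B u v ≥ 1`, hence
`B (a u + b v) (a u + b v) ≥ (a + b) ^ 2 = 1`: each sheet is convex, and since `u₀` cannot vanish
on `{B u u ≥ 1}`, the sheets are exactly the connected components. For the minimum, the Lagrange
condition reads `L c * L v = μ * B c v` for all `v`, so `L c ^ 2 = μ * B c c` and
`L c ^ 2 * L v ^ 2 * B c c = μ ^ 2 * B c v ^ 2 * B c c ≥ μ ^ 2 * (B c c) ^ 2 * B v v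
= L c ^ 4 * B v v`.
-/

open Finset

theorem fderiv_bilinForm_apply_self {𝕜 E : Type*} [NontriviallyNormedField 𝕜] [CompleteSpace 𝕜]
    [NormedAddCommGroup E] [NormedSpace 𝕜 E] [FiniteDimensional 𝕜 E]
    (B : LinearMap.BilinForm 𝕜 E) (x v : E) :
    fderiv 𝕜 (fun y => B y y) x v = B x v + B v x := by
  let Bc : E →L[𝕜] E →L[𝕜] 𝕜 :=
    LinearMap.toContinuousLinearMap (LinearMap.toContinuousLinearMap.toLinearMap ∘ₗ B)
  have h : HasFDerivAt (fun y => B y y) _ x :=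
    Bc.hasFDerivAt_of_bilinear (hasFDerivAt_id x) (hasFDerivAt_id x)
  rw [h.fderiv]
  simp [Bc]

theorem connectedComponentIn_eq_sep_mul_pos {X : Type*} [TopologicalSpace X] {S : Set X}
    {f : X → ℝ} (hf : ContinuousOn f S) (hf₀ : ∀ y ∈ S, f y ≠ 0) {x : X} (hx : x ∈ S)
    (hpre : IsPreconnected {y ∈ S | 0 < f y * f x}) :
    connectedComponentIn S x = {y ∈ S | 0 < f y * f x} := by
  refine subset_antisymm (fun y hy => ⟨connectedComponentIn_subset S x hy, ?_⟩)
    (hpre.subset_connectedComponentIn ⟨hx, mul_self_pos.2 (hf₀ x hx)⟩ fun y hy => hy.1)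
  by_contra! hyx
  have h0 : (0 : ℝ) ∈ Set.uIcc (f y) (f x) := by
    rcases (hf₀ y (connectedComponentIn_subset S x hy)).lt_or_gt with h | h
    · exact Set.mem_uIcc.2 (Or.inl ⟨h.le, by nlinarith⟩)
    · exact Set.mem_uIcc.2 (Or.inr ⟨by nlinarith, h.le⟩)
  have himage := isPreconnected_connectedComponentIn.image f
    (hf.mono (connectedComponentIn_subset S x))
  obtain ⟨z, hz, hz0⟩ := himage.ordConnected.uIcc_subset (Set.mem_image_of_mem f hy)
    (Set.mem_image_of_mem f (mem_connectedComponentIn hx)) h0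
  exact hf₀ z (connectedComponentIn_subset S x hz) hz0

section Minkowski

variable {ι : Type*} [Fintype ι] [DecidableEq ι] (i₀ : ι)

def minkowskiForm : LinearMap.BilinForm ℝ (ι → ℝ) :=
  LinearMap.mk₂ ℝ (fun u v => u i₀ * v i₀ - ∑ i ∈ univ.erase i₀, u i * v i)
    (fun u u' v => by simp only [Pi.add_apply, add_mul, sum_add_distrib]; ring)
    (fun c u v => by simp only [Pi.smul_apply, smul_eq_mul, mul_assoc, ← mul_sum]; ring)
    (fun u v v' => by simp only [Pi.add_apply, mul_add, sum_add_distrib]; ring)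
    (fun c u v => by simp only [Pi.smul_apply, smul_eq_mul, mul_left_comm _ c, ← mul_sum]; ring)

variable {i₀}

theorem minkowskiForm_apply (u v : ι → ℝ) :
    minkowskiForm i₀ u v = u i₀ * v i₀ - ∑ i ∈ univ.erase i₀, u i * v i :=
  rfl

theorem minkowskiForm_comm (u v : ι → ℝ) : minkowskiForm i₀ u v = minkowskiForm i₀ v u := by
  simp only [minkowskiForm_apply, mul_comm]

theorem apply_ne_zero_of_minkowskiForm_self_pos {u : ι → ℝ} (hu : 0 < minkowskiForm i₀ u u) :
    u i₀ ≠ 0 := by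
  intro h
  have hp : 0 ≤ ∑ i ∈ univ.erase i₀, u i * u i := sum_nonneg fun i _ => mul_self_nonneg _
  rw [minkowskiForm_apply, h, zero_mul] at hu
  linarith

theorem minkowskiForm_mul_self_le_sq {u : ι → ℝ} (hu : 0 < minkowskiForm i₀ u u) (v : ι → ℝ) :
    minkowskiForm i₀ u u * minkowskiForm i₀ v v ≤ minkowskiForm i₀ u v ^ 2 := by
  have hcs := sum_mul_sq_le_sq_mul_sq (univ.erase i₀) u v
  have hp : 0 ≤ ∑ i ∈ univ.erase i₀, u i ^ 2 := sum_nonneg fun i _ => sq_nonneg _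
  have hq : 0 ≤ ∑ i ∈ univ.erase i₀, v i ^ 2 := sum_nonneg fun i _ => sq_nonneg _
  simp only [minkowskiForm_apply, ← sq] at hu ⊢
  generalize ∑ i ∈ univ.erase i₀, u i ^ 2 = p at *
  generalize ∑ i ∈ univ.erase i₀, v i ^ 2 = q at *
  generalize ∑ i ∈ univ.erase i₀, u i * v i = s at *
  rcases hp.eq_or_lt with rfl | hp
  · obtain rfl : s = 0 := by nlinarith
    nlinarith [mul_nonneg (sq_nonneg (u i₀)) hq]
  -- `p * ((u₀ v₀ - s)² - (u₀² - p) (v₀² - q)) = (v₀ p - u₀ s)² + (u₀² - p) (p q - s²)`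
  · nlinarith [sq_nonneg (v i₀ * p - u i₀ * s), mul_nonneg hu.le (sub_nonneg.2 hcs)]

theorem minkowskiForm_pos {u v : ι → ℝ} (hu : 0 < minkowskiForm i₀ u u)
    (hv : 0 < minkowskiForm i₀ v v) (huv : 0 < u i₀ * v i₀) : 0 < minkowskiForm i₀ u v := by
  have hcs := sum_mul_sq_le_sq_mul_sq (univ.erase i₀) u v
  have hp : 0 ≤ ∑ i ∈ univ.erase i₀, u i ^ 2 := sum_nonneg fun i _ => sq_nonneg _
  have hq : 0 ≤ ∑ i ∈ univ.erase i₀, v i ^ 2 := sum_nonneg fun i _ => sq_nonneg _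
  simp only [minkowskiForm_apply, ← sq] at hu hv ⊢
  generalize ∑ i ∈ univ.erase i₀, u i ^ 2 = p at *
  generalize ∑ i ∈ univ.erase i₀, v i ^ 2 = q at *
  generalize ∑ i ∈ univ.erase i₀, u i * v i = s at *
  have hsq : s ^ 2 < (u i₀ * v i₀) ^ 2 := by
    nlinarith [mul_le_mul_of_nonneg_left (sub_pos.1 hv).le hp,
      mul_lt_mul_of_pos_right (sub_pos.1 hu) (hq.trans_lt (sub_pos.1 hv))]
  linarith [abs_lt_of_sq_lt_sq hsq huv.le, le_abs_self s]

theorem one_le_minkowskiForm {u v : ι → ℝ} (hu : 1 ≤ minkowskiForm i₀ u u)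
    (hv : 1 ≤ minkowskiForm i₀ v v) (huv : 0 < u i₀ * v i₀) : 1 ≤ minkowskiForm i₀ u v := by
  have hpos := minkowskiForm_pos (by linarith) (by linarith) huv
  nlinarith [minkowskiForm_mul_self_le_sq (i₀ := i₀) (u := u) (by linarith) v]

theorem convex_minkowskiSheet (t : ℝ) :
    Convex ℝ {u : ι → ℝ | 1 ≤ minkowskiForm i₀ u u ∧ 0 < u i₀ * t} := by
  rintro u ⟨hu, hut⟩ v ⟨hv, hvt⟩ a b ha hb hab
  have huv : 1 ≤ minkowskiForm i₀ u v :=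
    one_le_minkowskiForm hu hv (by nlinarith [mul_pos hut hvt, sq_nonneg t])
  refine ⟨?_, ?_⟩
  · have hexp : minkowskiForm i₀ (a • u + b • v) (a • u + b • v) = a ^ 2 * minkowskiForm i₀ u u
        + 2 * (a * b) * minkowskiForm i₀ u v + b ^ 2 * minkowskiForm i₀ v v := by
      simp only [map_add, map_smul, LinearMap.add_apply, LinearMap.smul_apply, smul_eq_mul,
        minkowskiForm_comm v u]
      ring
    rw [hexp]
    nlinarith [mul_nonneg ha hb]
  · have h := convex_Ioi (0 : ℝ) hut hvt ha hb hab
    simp only [Set.mem_Ioi, smul_eq_mul] at h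
    simp only [Pi.add_apply, Pi.smul_apply, smul_eq_mul]
    linarith

end Minkowski

theorem sq_div_le_sq_div_of_lagrange {E : Type*} (B : E → E → ℝ) (L : E → ℝ) {c : E} (μ : ℝ)
    (hc : 0 < B c c) (hLc : 0 < L c) (hμ : ∀ v, L c * L v = μ * B c v) {v : E}
    (hv : 0 < B v v) (hrev : B c c * B v v ≤ B c v ^ 2) :
    L c ^ 2 / B c c ≤ L v ^ 2 / B v v := by
  rw [div_le_div_iff₀ hc hv]
  refine le_of_mul_le_mul_left ?_ (pow_pos hLc 2)
  calc L c ^ 2 * (L c ^ 2 * B v v) = μ ^ 2 * B c c * (B c c * B v v) := by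
        rw [sq (L c), hμ c]; ring
    _ ≤ μ ^ 2 * B c c * B c v ^ 2 := by gcongr
    _ = B c c * (μ * B c v) ^ 2 := by ring
    _ = L c ^ 2 * (L v ^ 2 * B c c) := by rw [← hμ v]; ring

theorem hyperbolic_quadratic_form_min (d : ℕ) (hd : 1 ≤ d)
    (Q : (Fin d → ℝ) → ℝ) (e : (Fin d → ℝ) ≃ₗ[ℝ] (Fin d → ℝ))
    (hQ : ∀ x, Q x = (e x ⟨0, hd⟩) ^ 2 - ∑ i ∈ Finset.univ.erase (⟨0, hd⟩ : Fin d), (e x i) ^ 2) :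
    (∀ x ∈ {w : Fin d → ℝ | 1 ≤ Q w},
      Convex ℝ (connectedComponentIn {w : Fin d → ℝ | 1 ≤ Q w} x)) ∧
    ∀ (L : (Fin d → ℝ) →ₗ[ℝ] ℝ) (lc : Fin d → ℝ),
      0 < Q lc → 0 < L lc →
      (∃ μ : ℝ, ∀ v, fderiv ℝ (fun x => (L x) ^ 2) lc v = μ * fderiv ℝ Q lc v) →
      ∀ lam ∈ connectedComponentIn {x : Fin d → ℝ | 0 < Q x} lc,
        (L lc) ^ 2 / Q lc ≤ (L lam) ^ 2 / Q lam := by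
  set i₀ : Fin d := ⟨0, hd⟩
  obtain rfl : Q = fun x => minkowskiForm i₀ (e x) (e x) :=
    funext fun x => by simp only [hQ, minkowskiForm_apply, sq]
  beta_reduce at *
  refine ⟨fun x hx => ?_, fun L lc hlc hLlc ⟨μ, hμ⟩ lam hlam => ?_⟩
  · have hsheet := (convex_minkowskiSheet (i₀ := i₀) (e x i₀)).linear_preimage e.toLinearMap
    have hcont : Continuous fun w => e w i₀ :=
      (continuous_apply i₀).comp (LinearMap.continuous_of_finiteDimensional e.toLinearMap)
    rwa [connectedComponentIn_eq_sep_mul_pos (S := {w | 1 ≤ minkowskiForm i₀ (e w) (e w)})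
      hcont.continuousOn (fun y hy => apply_ne_zero_of_minkowskiForm_self_pos (one_pos.trans_le hy))
      hx hsheet.isPreconnected]
  · have hlagrange : ∀ v, L lc * L v = μ * minkowskiForm i₀ (e lc) (e v) := by
      intro v
      have hL := fderiv_bilinForm_apply_self ((LinearMap.mul ℝ ℝ).compl₁₂ L L) lc v
      have hQ' := fderiv_bilinForm_apply_self
        ((minkowskiForm i₀).compl₁₂ e.toLinearMap e.toLinearMap) lc v
      simp only [LinearMap.compl₁₂_apply, LinearMap.mul_apply', LinearEquiv.coe_coe, ← sq]
        at hL hQ'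
      have h := hμ v
      rw [hL, hQ', minkowskiForm_comm (e v)] at h
      linarith
    exact sq_div_le_sq_div_of_lagrange (fun x y => minkowskiForm i₀ (e x) (e y)) L μ hlc hLlc
      hlagrange (connectedComponentIn_subset {x | 0 < minkowskiForm i₀ (e x) (e x)} lc hlam)
      (minkowskiForm_mul_self_le_sq hlc _)
end
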